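/- arXiv:1503.03162 — 9 statements merged into one kernel-verified Lean document; each statement's English description precedes it below -/
import Mathlib

section
/- Let r be a prime power, m = 2, q = r². Suppose a₀, a₁ ∈ F_q, f₀, f₁ ∈ F_r[X] are q-linearized, and z in the algebraic closure of F_r satisfies a₀f₀(z) + a₁f₁(z)^r = 0. Then N_{q/r}(a₀)·(f₀∘f₀)(z) − N_{q/r}(a₁)·(f₁∘f₁)(z^q) = 0. -/
/-!
Over `F_r` a `q`-linearized polynomial is additive, `F_q`-linear, and commutes with the
Frobenius `x ↦ x ^ r` (its coefficients are fixed by it); in particular `f₀` and `f₁` commute.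
Applying `f₀` to the relation gives `a₀ f₀(f₀ z) + a₁ f₁(f₀ z)^r = 0`; raising the relation to
the `r`-th power and applying `f₁` gives `a₀^r f₁(f₀ z)^r + a₁^r f₁(f₁(z^q)) = 0`. Eliminating
`f₁(f₀ z)^r` between the two gives the claim.
-/

open Polynomial Finset

theorem pow_pow_eq_self {M : Type*} [Monoid M] {a : M} {q : ℕ} (h : a ^ q = a) (i : ℕ) :
    a ^ q ^ i = a := by
  induction i with
  | zero => simp
  | succ i ih => rw [pow_succ, pow_mul, ih, h]

def IsLinearized {R : Type*} [Semiring R] (S : Set R) (q : ℕ) (f : R[X]) : Prop :=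
  ∃ (n : ℕ) (c : ℕ → R), (∀ i, c i ∈ S) ∧ f = ∑ i ∈ range n, C (c i) * X ^ q ^ i

namespace IsLinearized

variable {R : Type*} [CommRing R] {S : Set R} {q : ℕ} {f g : R[X]}

theorem map_eval (hf : IsLinearized S q f) (φ : R →+* R) (hφ : ∀ s ∈ S, φ s = s) (x : R) :
    φ (f.eval x) = f.eval (φ x) := by
  obtain ⟨n, c, hc, rfl⟩ := hf
  simp [eval_finsetSum, hφ _ (hc _)]

theorem eval_mul_of_pow_eq (hf : IsLinearized S q f) {a : R} (ha : a ^ q = a) (x : R) :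
    f.eval (a * x) = a * f.eval x := by
  obtain ⟨n, c, -, rfl⟩ := hf
  simp only [eval_finsetSum, eval_mul, eval_C, eval_pow, eval_X, mul_sum, mul_pow,
    pow_pow_eq_self ha]
  exact sum_congr rfl fun _ _ ↦ by ring

variable (p : ℕ) [ExpChar R p] {e : ℕ}

theorem eval_add (hf : IsLinearized S q f) (hq : q = p ^ e) (x y : R) :
    f.eval (x + y) = f.eval x + f.eval y := by
  obtain ⟨n, c, -, rfl⟩ := hf
  simp only [eval_finsetSum, eval_mul, eval_C, eval_pow, eval_X, ← sum_add_distrib, hq,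
    ← pow_mul, add_pow_expChar_pow, mul_add]

theorem eval_zero (hf : IsLinearized S q f) (hq : q = p ^ e) : f.eval 0 = 0 := by
  simpa using hf.eval_add p hq 0 0

theorem eval_pow (hf : IsLinearized S q f) {d : ℕ} (hS : ∀ s ∈ S, s ^ p ^ d = s) (x : R) :
    f.eval (x ^ p ^ d) = f.eval x ^ p ^ d :=
  (hf.map_eval (iterateFrobenius R p d) hS x).symm

theorem eval_sum (hf : IsLinearized S q f) (hq : q = p ^ e) {ι : Type*} (s : Finset ι)
    (v : ι → R) : f.eval (∑ i ∈ s, v i) = ∑ i ∈ s, f.eval (v i) :=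
  map_sum (AddMonoidHom.mk' f.eval (hf.eval_add p hq)) v s

theorem eval_pow_pow (hf : IsLinearized S q f) (hq : q = p ^ e) (hS : ∀ s ∈ S, s ^ q = s)
    (i : ℕ) (x : R) : f.eval (x ^ q ^ i) = f.eval x ^ q ^ i := by
  rw [hq, ← pow_mul, hf.eval_pow p fun s hs ↦ ?_]
  rw [pow_mul, ← hq, pow_pow_eq_self (hS s hs)]

theorem eval_eval_comm (hf : IsLinearized S q f) (hg : IsLinearized S q g) (hq : q = p ^ e)
    (hS : ∀ s ∈ S, s ^ q = s) (x : R) : f.eval (g.eval x) = g.eval (f.eval x) := by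
  obtain ⟨n, c, hc, rfl⟩ := hf
  calc _ = ∑ i ∈ range n, c i * g.eval x ^ q ^ i := by simp [eval_finsetSum]
    _ = ∑ i ∈ range n, g.eval (c i * x ^ q ^ i) := by
      simp only [hg.eval_mul_of_pow_eq (hS _ (hc _)), hg.eval_pow_pow p hq hS]
    _ = _ := by simp [hg.eval_sum p hq, eval_finsetSum]

end IsLinearized

theorem Subfield.pow_card_eq_self {Ω : Type*} [Field Ω] (K : Subfield Ω) [Fintype K] {s : Ω}
    (hs : s ∈ K) : s ^ Fintype.card K = s := by
  simpa using congrArg Subtype.val (FiniteField.pow_card (⟨s, hs⟩ : K))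

theorem Subfield.exists_charP_card_eq_pow {Ω : Type*} [Field Ω] (K : Subfield Ω) [Fintype K] :
    ∃ p k : ℕ, p.Prime ∧ CharP Ω p ∧ Fintype.card K = p ^ k := by
  have := ringChar.charP K
  obtain ⟨k, hp, hcard⟩ := FiniteField.card K (ringChar K)
  exact ⟨ringChar K, k, hp, charP_of_injective_ringHom K.subtype.injective _, hcard⟩

theorem stmt6_general (r : ℕ)
    (Ω : Type*) [Field Ω]
    (K L : Subfield Ω) [Fintype K] [Fintype L]
    (hK : Fintype.card K = r) (hL : Fintype.card L = r ^ 2)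
    (a₀ a₁ : Ω) (ha₀ : a₀ ∈ L) (ha₁ : a₁ ∈ L)
    (f₀ f₁ : Polynomial Ω)
    (hf₀ : ∃ (n : ℕ) (c : ℕ → Ω), (∀ i, c i ∈ K) ∧
      f₀ = ∑ i ∈ Finset.range n, C (c i) * X ^ (r ^ 2) ^ i)
    (hf₁ : ∃ (n : ℕ) (c : ℕ → Ω), (∀ i, c i ∈ K) ∧
      f₁ = ∑ i ∈ Finset.range n, C (c i) * X ^ (r ^ 2) ^ i)
    (z : Ω) (hz : a₀ * f₀.eval z + a₁ * (f₁.eval z) ^ r = 0) :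
    a₀ ^ (1 + r) * (f₀.comp f₀).eval z - a₁ ^ (1 + r) * (f₁.comp f₁).eval (z ^ r ^ 2) = 0 := by
  obtain ⟨p, k, hp, hchar, hpk⟩ := K.exists_charP_card_eq_pow
  have := Fact.mk hp
  obtain rfl : r = p ^ k := hK ▸ hpk
  have hq : (p ^ k) ^ 2 = p ^ (k * 2) := (pow_mul p k 2).symm
  have hKr : ∀ s ∈ (K : Set Ω), s ^ p ^ k = s := fun s hs ↦ hK ▸ K.pow_card_eq_self hs
  have hKq : ∀ s ∈ (K : Set Ω), s ^ (p ^ k) ^ 2 = s := fun s hs ↦ pow_pow_eq_self (hKr s hs) 2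
  have hLq {a : Ω} (ha : a ∈ L) : a ^ (p ^ k) ^ 2 = a := hL ▸ L.pow_card_eq_self ha
  have hLq_pow {a : Ω} (ha : a ∈ L) : (a ^ p ^ k) ^ (p ^ k) ^ 2 = a ^ p ^ k := by
    rw [← pow_mul, mul_comm, pow_mul, hLq ha]
  have g₀ : IsLinearized (K : Set Ω) ((p ^ k) ^ 2) f₀ := hf₀
  have g₁ : IsLinearized (K : Set Ω) ((p ^ k) ^ 2) f₁ := hf₁
  have hf₀_rel : a₀ * f₀.eval (f₀.eval z) + a₁ * f₁.eval (f₀.eval z) ^ p ^ k = 0 := by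
    have := congrArg f₀.eval hz
    rwa [g₀.eval_add p hq, g₀.eval_mul_of_pow_eq (hLq ha₀), g₀.eval_mul_of_pow_eq (hLq ha₁),
      g₀.eval_pow p hKr, g₀.eval_zero p hq, g₀.eval_eval_comm p g₁ hq hKq] at this
  have hf₁_rel : a₀ ^ p ^ k * f₁.eval (f₀.eval z) ^ p ^ k
      + a₁ ^ p ^ k * f₁.eval (f₁.eval (z ^ (p ^ k) ^ 2)) = 0 := by
    have := congrArg (fun y ↦ f₁.eval (y ^ p ^ k)) hz
    rwa [add_pow_expChar_pow, mul_pow, mul_pow, ← g₁.eval_pow p hKr, ← g₁.eval_pow p hKr,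
      ← pow_mul, ← sq, g₁.eval_add p hq, g₁.eval_mul_of_pow_eq (hLq_pow ha₀),
      g₁.eval_mul_of_pow_eq (hLq_pow ha₁), g₁.eval_pow p hKr, zero_pow (pow_ne_zero k hp.ne_zero),
      g₁.eval_zero p hq] at this
  rw [eval_comp, eval_comp, pow_add, pow_one]
  linear_combination a₀ ^ p ^ k * hf₀_rel - a₁ * hf₁_rel

/-- The case `m = 2`, `q = r²`: if `a₀ f₀(z) + a₁ f₁(z)^r = 0`, where `a₀, a₁ ∈ F_q` and
`f₀, f₁` are `q`-linearized over `F_r`, then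
`N_{q/r}(a₀)·(f₀∘f₀)(z) − N_{q/r}(a₁)·(f₁∘f₁)(z^q) = 0`. -/
theorem stmt6 (r : ℕ) (hr : IsPrimePow r)
    (Ω : Type*) [Field Ω] [IsAlgClosed Ω]
    (K L : Subfield Ω) [Fintype K] [Fintype L]
    (hK : Fintype.card K = r) (hL : Fintype.card L = r ^ 2)
    (a₀ a₁ : Ω) (ha₀ : a₀ ∈ L) (ha₁ : a₁ ∈ L)
    (f₀ f₁ : Polynomial Ω)
    (hf₀ : ∃ (n : ℕ) (c : ℕ → Ω), (∀ i, c i ∈ K) ∧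
      f₀ = ∑ i ∈ Finset.range n, C (c i) * X ^ (r ^ 2) ^ i)
    (hf₁ : ∃ (n : ℕ) (c : ℕ → Ω), (∀ i, c i ∈ K) ∧
      f₁ = ∑ i ∈ Finset.range n, C (c i) * X ^ (r ^ 2) ^ i)
    (z : Ω) (hz : a₀ * f₀.eval z + a₁ * (f₁.eval z) ^ r = 0) :
    a₀ ^ (1 + r) * (f₀.comp f₀).eval z - a₁ ^ (1 + r) * (f₁.comp f₁).eval (z ^ r ^ 2) = 0 :=
  stmt6_general r Ω K L hK hL a₀ a₁ ha₀ ha₁ f₀ f₁ hf₀ hf₁ z hz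
end

section
/- Let r be a prime power, q = r^m, a₀,...,a_{m−1} ∈ F_q, and f₀,...,f_{m−1} ∈ F_r[X] q-linearized polynomials. Form the m×m matrix M over the ring R_q of q-linearized polynomials whose (i,j) entry (indices mod m) is a_{j−i}^{r^i} · f_{j−i} ∘ X^{r^{δ(i,j)}}, where δ(i,j) = 0 if i ≤ j and δ(i,j) = m if i > j. If z in the algebraic closure of F_r satisfies Σ_{i=0}^{m−1} aᵢ fᵢ(z)^{r^i} = 0, then (det M)(z) = 0. -/
/-!
Let `E` be the ring of elements fixed by `x ↦ x ^ q`. Sending `∑ cₖ Xᵏ ∈ E[X]` to the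
`q`-linearized polynomial `∑ cₖ X^(qᵏ)` turns products into compositions, and every entry of `M`
is the image of an entry of a matrix `A` over the commutative ring `E[X]`; so the Leibniz
expression is the image of `det A`, acting on the algebraic closure. Raising the hypothesis to
the `r ^ i`-th power (which commutes with the `fⱼ`, whose coefficients lie in `F_r`) shows that
`M` annihilates the vector `w = (z ^ r ^ j)ⱼ`. Multiplying by the adjugate of `A`, `det A` kills
every `wⱼ`, in particular `w₀ = z`.
-/

open Polynomial Finset

theorem Matrix.det_smul_eq_zero_of_forall_sum_smul_eq_zero {ι R N : Type*} [Fintype ι]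
    [DecidableEq ι] [CommRing R] [AddCommGroup N] [Module R N] (A : Matrix ι ι R) {w : ι → N}
    (hw : ∀ i, ∑ j, A i j • w j = 0) (k : ι) : A.det • w k = 0 :=
  calc A.det • w k = ∑ j, (A.adjugate * A) k j • w j := by
        simp [Matrix.adjugate_mul, Matrix.one_apply]
    _ = ∑ i, A.adjugate k i • ∑ j, A i j • w j := by
        simp only [Matrix.mul_apply, Finset.sum_smul, Finset.smul_sum, mul_smul]
        exact Finset.sum_comm
    _ = 0 := by simp [hw]

theorem ZMod.prod_eq_list_prod_map_range {M : Type*} [CommMonoid M] (m : ℕ) [NeZero m]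
    (g : ZMod m → M) : ∏ i, g i = (((List.range m).map (Nat.cast : ℕ → ZMod m)).map g).prod := by
  classical
  rw [← List.prod_toFinset _ ((List.nodup_range).map_on _)]
  · congr 1
    ext i
    simpa using ⟨i.val, ZMod.val_lt i, ZMod.natCast_zmod_val i⟩
  · intro x hx y hy hxy
    simp only [List.mem_range] at hx hy
    rw [← ZMod.val_cast_of_lt hx, ← ZMod.val_cast_of_lt hy, hxy]

theorem Matrix.det_eq_sum_sign_smul_list_prod {R : Type*} [CommRing R] {m : ℕ} [NeZero m]
    (A : Matrix (ZMod m) (ZMod m) R) :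
    A.det = ∑ σ : Equiv.Perm (ZMod m), (Equiv.Perm.sign σ : ℤ) •
      (((List.range m).map (Nat.cast : ℕ → ZMod m)).map fun i => A i (σ i)).prod := by
  rw [← A.det_transpose, Matrix.det_apply]
  simp [ZMod.prod_eq_list_prod_map_range, Units.smul_def]

theorem Polynomial.eval_foldr_comp {ι R E : Type*} [CommRing R] [Semiring E] [Module E R]
    (g : ι → R[X]) (G : ι → Module.End E R) (hG : ∀ i x, (g i).eval x = G i x) (l : List ι)
    (x : R) : (l.foldr (fun i acc => (g i).comp acc) X).eval x = (l.map G).prod x := by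
  induction l with
  | nil => simp
  | cons i l ih => simp [hG, ih, Module.End.mul_apply]

theorem eval_sum_sign_smul_foldr_comp_eq_zero {R E S : Type*} [CommRing R] [CommRing E]
    [Module E R] [CommRing S] {m : ℕ} [NeZero m] (Φ : S →+* Module.End E R)
    (A : Matrix (ZMod m) (ZMod m) S) (M : ZMod m → ZMod m → R[X])
    (hMA : ∀ i j x, (M i j).eval x = Φ (A i j) x) {w : ZMod m → R}
    (hw : ∀ i, ∑ j, (M i j).eval (w j) = 0) (k : ZMod m) :
    (∑ σ : Equiv.Perm (ZMod m), (Equiv.Perm.sign σ : ℤ) •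
      ((List.range m).map (Nat.cast : ℕ → ZMod m)).foldr
        (fun i acc => (M i (σ i)).comp acc) X).eval (w k) = 0 := by
  let _ : Module S R := Module.compHom R Φ
  have hdet : Φ A.det (w k) = 0 := A.det_smul_eq_zero_of_forall_sum_smul_eq_zero
    (fun i => (sum_congr rfl fun j _ => (hMA i j (w j)).symm).trans (hw i)) k
  rw [← hdet, A.det_eq_sum_sign_smul_list_prod, eval_finsetSum, map_sum, LinearMap.sum_apply]
  refine sum_congr rfl fun σ _ => ?_
  rw [eval_smul, map_zsmul, LinearMap.smul_apply, map_list_prod, List.map_map,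
    eval_foldr_comp _ _ fun i x => hMA i (σ i) x]
  rfl

theorem ZMod.ite_add_val_eq_val_add_val_sub {m : ℕ} [NeZero m] (i j : ZMod m) :
    (if i.val ≤ j.val then 0 else m) + j.val = i.val + (j - i).val := by
  have hj := sub_add_cancel j i
  have := ZMod.val_lt j
  have := ZMod.val_lt (j - i)
  rcases lt_or_ge ((j - i).val + i.val) m with h | h
  · have := ZMod.val_add_of_lt h
    rw [hj] at this
    split_ifs <;> omega
  · have := ZMod.val_add_val_of_le h
    rw [hj] at this
    split_ifs <;> omega

section LinearizedAction

variable {R : Type*} [CommRing R] (φ : R →+* R)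

def RingHom.eqLocusAlgHom : R →ₐ[φ.eqLocus (RingHom.id R)] R where
  toRingHom := φ
  commutes' c := c.2

/-- `∑ cₖ Xᵏ` acts by `x ↦ ∑ cₖ φᵏ(x)`. For `φ x = x ^ q` this is evaluation of the
`q`-linearized polynomial `∑ cₖ X^(qᵏ)`, so composition of linearized polynomials with
coefficients fixed by `φ` becomes multiplication of polynomials. -/
noncomputable def linearizedAction :
    (φ.eqLocus (RingHom.id R))[X] →ₐ[φ.eqLocus (RingHom.id R)]
      Module.End (φ.eqLocus (RingHom.id R)) R :=
  aeval φ.eqLocusAlgHom.toLinearMap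

theorem linearizedAction_X_pow_apply (k : ℕ) (x : R) :
    linearizedAction φ (X ^ k) x = φ^[k] x := by
  rw [linearizedAction, map_pow, aeval_X, Module.End.pow_apply]
  rfl

theorem linearizedAction_C_mul_apply (c : φ.eqLocus (RingHom.id R))
    (P : (φ.eqLocus (RingHom.id R))[X]) (x : R) :
    linearizedAction φ (C c * P) x = c * linearizedAction φ P x := by
  rw [← smul_eq_C_mul, map_smul]
  rfl

theorem linearizedAction_mul_X_pow_apply (P : (φ.eqLocus (RingHom.id R))[X]) (d : ℕ) (x : R) :
    linearizedAction φ (P * X ^ d) x = linearizedAction φ P (φ^[d] x) := by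
  rw [map_mul, Module.End.mul_apply, linearizedAction_X_pow_apply]

theorem exists_linearizedAction_apply_eq_eval {q : ℕ} (hφ : ∀ x, φ x = x ^ q) {c : ℕ → R}
    (hc : ∀ k, φ (c k) = c k) (N : ℕ) :
    ∃ P, ∀ x, linearizedAction φ P x = (∑ k ∈ range N, C (c k) * X ^ q ^ k).eval x := by
  refine ⟨∑ k ∈ range N, C ⟨c k, hc k⟩ * X ^ k, fun x => ?_⟩
  simp only [map_sum, LinearMap.sum_apply, linearizedAction_C_mul_apply,
    linearizedAction_X_pow_apply, show ⇑φ = (· ^ q) from funext hφ, pow_iterate, eval_finsetSum,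
    eval_mul, eval_C, eval_pow, eval_X]

end LinearizedAction

theorem eval_sum_C_mul_X_pow_map {R : Type*} [CommSemiring R] (ψ : R →+* R) {c : ℕ → R}
    (hc : ∀ k, ψ (c k) = c k) (N d : ℕ) (x : R) :
    (∑ k ∈ range N, C (c k) * X ^ d ^ k).eval (ψ x) =
      ψ ((∑ k ∈ range N, C (c k) * X ^ d ^ k).eval x) := by
  simp [eval_finsetSum, hc]

theorem Subfield.exists_ringHom_apply_eq_pow_card_pow {Ω : Type*} [Field Ω] (K : Subfield Ω)
    [Fintype K] : ∃ ψ : ℕ → Ω →+* Ω, ∀ e x, ψ e x = x ^ Fintype.card K ^ e := by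
  have := ringChar.charP K
  obtain ⟨n, hp, hcard⟩ := FiniteField.card K (ringChar K)
  have : Fact (ringChar K).Prime := ⟨hp⟩
  have := charP_of_injective_ringHom K.subtype.injective (ringChar K)
  exact ⟨fun e => iterateFrobenius Ω (ringChar K) (n * e), fun e x => by
    rw [iterateFrobenius_def, hcard, pow_mul]⟩

theorem Subfield.pow_card_pow_of_mem {Ω : Type*} [Field Ω] (K : Subfield Ω) [Fintype K] {c : Ω}
    (hc : c ∈ K) (e : ℕ) : c ^ Fintype.card K ^ e = c :=
  congrArg Subtype.val (FiniteField.pow_card_pow e (⟨c, hc⟩ : K))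

theorem sum_eval_pow_pow_eq_zero {Ω : Type*} [CommRing Ω] {r m : ℕ} [NeZero m]
    (ψ : ℕ → Ω →+* Ω) (hψ : ∀ e x, ψ e x = x ^ r ^ e) (a : ZMod m → Ω)
    (f : ZMod m → Polynomial Ω) (hf : ∀ t x e, (f t).eval (x ^ r ^ e) = (f t).eval x ^ r ^ e)
    (M : ZMod m → ZMod m → Polynomial Ω)
    (hM : ∀ i j, M i j = C (a (j - i) ^ r ^ i.val) *
        ((f (j - i)).comp (X ^ r ^ (if i.val ≤ j.val then 0 else m))))
    {z : Ω} (hz : ∑ i : ZMod m, a i * (f i).eval z ^ r ^ i.val = 0) (i : ZMod m) :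
    ∑ j, (M i j).eval (z ^ r ^ j.val) = 0 := by
  calc ∑ j, (M i j).eval (z ^ r ^ j.val)
      = ∑ j, a (j - i) ^ r ^ i.val * (f (j - i)).eval z ^ r ^ (i.val + (j - i).val) := by
        refine sum_congr rfl fun j _ => ?_
        rw [hM, eval_mul, eval_C, eval_comp, eval_pow, eval_X, ← pow_mul', ← pow_add,
          ZMod.ite_add_val_eq_val_add_val_sub, hf]
    _ = ∑ t, a t ^ r ^ i.val * (f t).eval z ^ r ^ (i.val + t.val) :=
        Fintype.sum_equiv (Equiv.subRight i) _ _ fun _ => rfl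
    _ = ψ i.val (∑ t, a t * (f t).eval z ^ r ^ t.val) := by
        rw [map_sum]
        refine sum_congr rfl fun t _ => ?_
        rw [map_mul, map_pow, hψ, hψ, ← pow_mul, ← pow_add, add_comm]
    _ = 0 := by rw [hz, map_zero]

theorem stmt8_general (r m : ℕ) [NeZero m]
    (Ω : Type*) [Field Ω]
    (K L : Subfield Ω) [Fintype K] [Fintype L]
    (hK : Fintype.card K = r) (hL : Fintype.card L = r ^ m)
    (a : ZMod m → Ω) (ha : ∀ i, a i ∈ L)
    (f : ZMod m → Polynomial Ω)
    (hf : ∀ i, ∃ (n : ℕ) (c : ℕ → Ω), (∀ k, c k ∈ K) ∧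
      f i = ∑ k ∈ Finset.range n, C (c k) * X ^ (r ^ m) ^ k)
    (M : ZMod m → ZMod m → Polynomial Ω)
    (hM : ∀ i j, M i j =
      C (a (j - i) ^ r ^ i.val) *
        ((f (j - i)).comp (X ^ r ^ (if i.val ≤ j.val then 0 else m))))
    (z : Ω) (hz : ∑ i : ZMod m, a i * (f i).eval z ^ r ^ i.val = 0) :
    (∑ σ : Equiv.Perm (ZMod m),
        (Equiv.Perm.sign σ : ℤ) •
          (List.range m).foldr (fun i acc => (M (i : ZMod m) (σ (i : ZMod m))).comp acc) X).eval
        z = 0 := by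
  obtain ⟨ψ, hψ⟩ := K.exists_ringHom_apply_eq_pow_card_pow
  rw [hK] at hψ
  have hKfix : ∀ c ∈ K, ∀ e, ψ e c = c := fun c hc e =>
    (hψ e c).trans (hK ▸ K.pow_card_pow_of_mem hc e)
  set φ := ψ m
  have hLfix : ∀ x ∈ L, x ∈ φ.eqLocus (RingHom.id Ω) := fun x hx =>
    (hψ m x).trans (by simpa [hL] using L.pow_card_pow_of_mem hx 1)
  choose N c hcK hfc using hf
  choose F hF using fun t =>
    exists_linearizedAction_apply_eq_eval φ (hψ m) (fun k => hKfix _ (hcK t k) m) (N t)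
  -- `X ^ r ^ m = X ^ q` is the linearized polynomial of `X`.
  let A : Matrix (ZMod m) (ZMod m) (φ.eqLocus (RingHom.id Ω))[X] := .of fun i j =>
    C ⟨a (j - i) ^ r ^ i.val, pow_mem (hLfix _ (ha _)) _⟩ * F (j - i) *
      X ^ (if i.val ≤ j.val then 0 else 1)
  have hMA : ∀ i j x, (M i j).eval x = linearizedAction φ (A i j) x := by
    intro i j x
    simp only [hM, A, Matrix.of_apply]
    rw [linearizedAction_mul_X_pow_apply, linearizedAction_C_mul_apply, hfc, hF, eval_mul,
      eval_C, eval_comp]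
    split_ifs <;> simp [φ, hψ]
  have hfr : ∀ t x e, (f t).eval (x ^ r ^ e) = (f t).eval x ^ r ^ e := fun t x e => by
    rw [← hψ, ← hψ, hfc, eval_sum_C_mul_X_pow_map _ fun k => hKfix _ (hcK t k) e]
  rw [show (List.range m >>= fun k => pure (k : ZMod m)) = (List.range m).map Nat.cast from
    List.flatMap_pure_eq_map _ _]
  simpa using eval_sum_sign_smul_foldr_comp_eq_zero (linearizedAction φ).toRingHom A M hMA
    (sum_eval_pow_pow_eq_zero ψ hψ a f hfr M hM hz) 0

/-- Theorem 2.1: if `z` satisfies the `r`-linearized equation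
`∑_{i<m} aᵢ fᵢ(z)^{r^i} = 0` (with `aᵢ ∈ F_q`, `fᵢ ∈ F_r[X]` being `q`-linearized,
`q = r^m`), then `(det M)(z) = 0`, where `M` is the `m×m` matrix over the commutative ring
of `q`-linearized polynomials (with composition as multiplication) whose `(i,j)` entry is
`a_{j-i}^{r^i}·(f_{j-i} ∘ X^{r^{δ(i,j)}})`, `δ(i,j) = 0` if `i ≤ j` and `= m` if `i > j`.
The determinant is written out via the Leibniz formula, products being compositions. -/
theorem stmt8 (r m : ℕ) [NeZero m] (hr : IsPrimePow r)
    (Ω : Type*) [Field Ω] [IsAlgClosed Ω]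
    (K L : Subfield Ω) [Fintype K] [Fintype L]
    (hK : Fintype.card K = r) (hL : Fintype.card L = r ^ m)
    (a : ZMod m → Ω) (ha : ∀ i, a i ∈ L)
    (f : ZMod m → Polynomial Ω)
    (hf : ∀ i, ∃ (n : ℕ) (c : ℕ → Ω), (∀ k, c k ∈ K) ∧
      f i = ∑ k ∈ Finset.range n, C (c k) * X ^ (r ^ m) ^ k)
    (M : ZMod m → ZMod m → Polynomial Ω)
    (hM : ∀ i j, M i j =
      C (a (j - i) ^ r ^ i.val) *
        ((f (j - i)).comp (X ^ r ^ (if i.val ≤ j.val then 0 else m))))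
    (z : Ω) (hz : ∑ i : ZMod m, a i * (f i).eval z ^ r ^ i.val = 0) :
    (∑ σ : Equiv.Perm (ZMod m),
        (Equiv.Perm.sign σ : ℤ) •
          (List.range m).foldr (fun i acc => (M (i : ZMod m) (σ (i : ZMod m))).comp acc) X).eval
        z = 0 :=
  stmt8_general r m Ω K L hK hL a ha f hf M hM z hz
end

section
/- With M as in the determinant construction for an r-linearized equation with coefficients in F_{r^m}, all coefficients of the q-linearized polynomial det M lie in the base field F_r; equivalently, for each admissible multiplicity vector (μ₀,...,μ_{m−1}), the coefficient c = Σ_{σ ∈ 𝔖} (−1)^{sgn σ} ∏_{i=0}^{m−1} aᵢ^{Σ_{j: σ(j)−j ≡ i} r^j} satisfies c^r = c, where 𝔖 is the set of permutations σ of Z/mZ with difference multiset given by (μ₀,...,μ_{m−1}). -/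
/-!
Conjugating a permutation `σ` of `ℤ/mℤ` by the shift `j ↦ j + 1` preserves its sign and the
multiset of differences `σ j - j`, and shifts every position `j` by one. Since `aᵢ ^ r ^ m = aᵢ`,
raising the term of `σ` to the `r`-th power turns each exponent `r ^ j` into `r ^ (j + 1)`, so it
yields the term of the conjugate of `σ`. As `x ↦ x ^ r` is a ring endomorphism in characteristic
`p` with `r` a power of `p`, `c ^ r` is the sum of the terms of a permutation of `𝔖`, i.e. `c`.
-/

open Finset Equiv

namespace ZMod

variable {m : ℕ} [NeZero m]

lemma pow_pow_val_add_one {M : Type*} [Monoid M] {x : M} {r : ℕ} (hx : x ^ r ^ m = x)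
    (j : ZMod m) : x ^ r ^ (j + 1).val = (x ^ r ^ j.val) ^ r := by
  rw [← pow_mul, ← pow_succ, val_add, val_one_eq_one_mod, Nat.add_mod_mod]
  rcases (show j.val + 1 ≤ m from j.val_lt).lt_or_eq with hlt | heq
  · rw [Nat.mod_eq_of_lt hlt]
  · rw [heq, Nat.mod_self, pow_zero, pow_one, hx]

lemma pow_sum_pow_val_add_one {M : Type*} [CommMonoid M] {x : M} {r : ℕ} (hx : x ^ r ^ m = x)
    (T : Finset (ZMod m)) : x ^ ∑ j ∈ T, r ^ (j + 1).val = (x ^ ∑ j ∈ T, r ^ j.val) ^ r := by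
  simp only [← prod_pow_eq_pow_sum, ← prod_pow, pow_pow_val_add_one hx]

end ZMod

section Displacement

variable {G : Type*} [AddCommGroup G] [Fintype G] [DecidableEq G]

def displacementSet (σ : Perm G) (i : G) : Finset G := {j | σ j - j = i}

lemma displacementSet_conj_addRight (t : G) (σ : Perm G) (i : G) :
    displacementSet (MulAut.conj (Equiv.addRight t) σ) i =
      (displacementSet σ i).map (Equiv.addRight t).toEmbedding := by
  ext j
  simp only [displacementSet, mem_filter, mem_univ, true_and, mem_map_equiv, MulAut.conj_apply,
    Perm.mul_apply, Perm.inv_def, addRight_symm, coe_addRight]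
  constructor <;> intro h <;> rw [← h] <;> abel

lemma card_displacementSet_conj_addRight (t : G) (σ : Perm G) (i : G) :
    #(displacementSet (MulAut.conj (Equiv.addRight t) σ) i) = #(displacementSet σ i) := by
  rw [displacementSet_conj_addRight, card_map]

end Displacement

section Coefficient

variable {R : Type*} [CommRing R] {m : ℕ} [NeZero m]

/-- The coefficient of `det M` attached to the multiplicity vector `μ`. -/
def detCoeff (r : ℕ) (a : ZMod m → R) (μ : ZMod m → ℕ) : R :=
  ∑ σ ∈ {σ : Perm (ZMod m) | ∀ i, #(displacementSet σ i) = μ i},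
    ((Perm.sign σ : ℤ) : R) * ∏ i, a i ^ ∑ j ∈ displacementSet σ i, r ^ j.val

lemma detCoeff_pow_eq_self (p k : ℕ) [ExpChar R p] {a : ZMod m → R}
    (ha : ∀ i, a i ^ (p ^ k) ^ m = a i) (μ : ZMod m → ℕ) :
    detCoeff (p ^ k) a μ ^ p ^ k = detCoeff (p ^ k) a μ := by
  let shift := MulAut.conj (Equiv.addRight (1 : ZMod m))
  rw [← iterateFrobenius_def, detCoeff, map_sum]
  refine sum_equiv shift.toEquiv (fun σ => ?_) (fun σ _ => ?_)
  · simp only [mem_filter, mem_univ, true_and, MulEquiv.toEquiv_eq_coe, MulEquiv.coe_toEquiv,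
      shift, card_displacementSet_conj_addRight]
  · have hsign : Perm.sign (shift σ) = Perm.sign σ := by
      rw [MulAut.conj_apply, map_mul, map_mul, Perm.sign_inv, mul_right_comm, Int.units_mul_self,
        one_mul]
    simp only [map_mul, map_intCast, map_prod, iterateFrobenius_def, MulEquiv.toEquiv_eq_coe,
      MulEquiv.coe_toEquiv, hsign, shift, displacementSet_conj_addRight, sum_map,
      coe_toEmbedding, coe_addRight, ZMod.pow_sum_pow_val_add_one (ha _)]

end Coefficient

lemma Subfield.exists_charP_of_card_eq_pow {Ω : Type*} [Field Ω] (L : Subfield Ω) [Fintype L]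
    {r m : ℕ} (hm : m ≠ 0) (hL : Fintype.card L = r ^ m) :
    ∃ p k, p.Prime ∧ CharP Ω p ∧ r = p ^ k := by
  have := ringChar.charP L
  obtain ⟨n, hp, hcard⟩ := FiniteField.card L (ringChar L)
  have hr : r ∣ ringChar L ^ (n : ℕ) := hcard ▸ hL ▸ dvd_pow_self r hm
  obtain ⟨k, -, rfl⟩ := (Nat.dvd_prime_pow hp).1 hr
  exact ⟨ringChar L, k, hp, charP_of_injective_ringHom L.subtype_injective _, rfl⟩

theorem stmt9_general (r m : ℕ) [NeZero m]
    (Ω : Type*) [Field Ω]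
    (L : Subfield Ω) [Fintype L] (hL : Fintype.card L = r ^ m)
    (a : ZMod m → Ω) (ha : ∀ i, a i ∈ L)
    (μ : ZMod m → ℕ)
    (c : Ω)
    (hc : c = ∑ σ ∈ Finset.univ.filter
        (fun σ : Equiv.Perm (ZMod m) =>
          ∀ i : ZMod m, (Finset.univ.filter fun j : ZMod m => σ j - j = i).card = μ i),
      ((Equiv.Perm.sign σ : ℤ) : Ω) *
        ∏ i : ZMod m,
          a i ^ (∑ j ∈ Finset.univ.filter (fun j : ZMod m => σ j - j = i), r ^ j.val)) :
    c ^ r = c := by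
  obtain ⟨p, k, hp, hchar, rfl⟩ := L.exists_charP_of_card_eq_pow (NeZero.ne m) hL
  have := ExpChar.prime (R := Ω) hp
  have ha' (i : ZMod m) : a i ^ (p ^ k) ^ m = a i := by
    simpa [hL] using congrArg Subtype.val (FiniteField.pow_card (⟨a i, ha i⟩ : L))
  exact hc ▸ detCoeff_pow_eq_self p k ha' μ

/-- The coefficients of `det M` lie in `F_r`: for each admissible multiplicity vector
`(μ₀, ..., μ_{m-1})`, the coefficient
`c = ∑_{σ ∈ 𝔖} (−1)^{sgn σ} ∏ᵢ aᵢ^{∑_{j : σ(j)−j ≡ i} r^j}` satisfies `c^r = c`, where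
`𝔖` is the set of permutations of `ℤ/mℤ` with difference multiset `(μ₀, ..., μ_{m-1})`. -/
theorem stmt9 (r m : ℕ) [NeZero m] (hr : IsPrimePow r)
    (Ω : Type*) [Field Ω]
    (L : Subfield Ω) [Fintype L] (hL : Fintype.card L = r ^ m)
    (a : ZMod m → Ω) (ha : ∀ i, a i ∈ L)
    (μ : ZMod m → ℕ) (h1 : ∑ i : ZMod m, μ i = m)
    (h2 : (∑ i : ZMod m, i.val * μ i) % m = 0)
    (c : Ω)
    (hc : c = ∑ σ ∈ Finset.univ.filter
        (fun σ : Equiv.Perm (ZMod m) =>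
          ∀ i : ZMod m, (Finset.univ.filter fun j : ZMod m => σ j - j = i).card = μ i),
      ((Equiv.Perm.sign σ : ℤ) : Ω) *
        ∏ i : ZMod m,
          a i ^ (∑ j ∈ Finset.univ.filter (fun j : ZMod m => σ j - j = i), r ^ j.val)) :
    c ^ r = c :=
  stmt9_general r m Ω L hL a ha μ c hc
end

section
/- For each integer n ≥ 0 and prime power q, there is a unique polynomial g_{n,q} ∈ F_p[X] (p = char F_q) satisfying Σ_{c ∈ F_q} (X + c)^n = g_{n,q}(X^q − X), and for integers n ≥ 0 and a ≥ b ≥ 0 one has g_{n+q^a, q} − g_{n+q^b, q} = (S_a − S_b) · g_{n,q}, where S_a = X + X^q + ... + X^{q^{a−1}}. -/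
open Polynomial Finset

section Aux

variable {F : Type*} [Field F] [Fintype F]

lemma aux_comp_inj {q : ℕ} (hq : Fintype.card F = q) {g₁ g₂ : Polynomial F}
    (h : g₁.comp (X ^ q - X) = g₂.comp (X ^ q - X)) : g₁ = g₂ := by
  have hq2 : 1 < q := hq ▸ Fintype.one_lt_card
  have h0 : (g₁ - g₂).comp (X ^ q - X) = 0 := by rw [sub_comp, h, sub_self]
  rcases comp_eq_zero_iff.mp h0 with h' | ⟨_, h'⟩
  · exact sub_eq_zero.mp h'
  · exfalso
    have h1 : (X ^ q - X : Polynomial F).natDegree = q :=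
      FiniteField.X_pow_card_sub_X_natDegree_eq F hq2
    rw [h', natDegree_C] at h1
    omega

lemma aux_s_ne {q : ℕ} (hq : Fintype.card F = q) : (X ^ q - X : Polynomial F) ≠ 0 :=
  FiniteField.X_pow_card_sub_X_ne_zero F (hq ▸ Fintype.one_lt_card)

lemma aux_s_comp {q p e : ℕ} [Fact p.Prime] [CharP F p] (hq : Fintype.card F = q)
    (hcard : q = p ^ e) (c : F) :
    (X ^ q - X : Polynomial F).comp (X + C c) = X ^ q - X := by
  rw [sub_comp, pow_comp, X_comp, hcard, add_pow_char_pow]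
  have hc : (C c : Polynomial F) ^ p ^ e = C c := by
    rw [← C_pow, ← hcard, ← hq, FiniteField.pow_card]
  rw [hc]
  ring

lemma aux_exists {q p e : ℕ} [Fact p.Prime] [CharP F p] (hq : Fintype.card F = q)
    (hcard : q = p ^ e) :
    ∀ N (f : Polynomial F), f.natDegree ≤ N → (∀ c : F, f.comp (X + C c) = f) →
      ∃ g : Polynomial F, f = g.comp (X ^ q - X) := by
  have hq2 : 1 < q := hq ▸ Fintype.one_lt_card
  intro N
  induction N using Nat.strong_induction_on with
  | _ N ih =>
    intro f hdeg hinv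
    by_cases h0 : f - C (f.coeff 0) = 0
    · refine ⟨C (f.coeff 0), ?_⟩
      rw [C_comp]
      exact sub_eq_zero.mp h0
    · have hroot : ∀ a : F, (f - C (f.coeff 0)).IsRoot a := by
        intro a
        have h1 := congrArg (eval 0) (hinv a)
        simp only [eval_comp, eval_add, eval_X, eval_C, zero_add] at h1
        simp [IsRoot, coeff_zero_eq_eval_zero, h1]
      have hle : (Finset.univ.val : Multiset F) ≤ (f - C (f.coeff 0)).roots := by
        rw [Multiset.le_iff_subset Finset.univ.nodup]
        intro a _
        exact mem_roots'.mpr ⟨h0, hroot a⟩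
      have hprod : ((Finset.univ.val : Multiset F).map fun a => X - C a).prod
          = (X ^ q - X : Polynomial F) := by
        have hm : (X ^ q - X : Polynomial F).Monic := by
          apply monic_X_pow_sub
          rw [degree_X]
          exact_mod_cast hq2
        have hr := FiniteField.roots_X_pow_card_sub_X F
        rw [hq] at hr
        have hc : Multiset.card (X ^ q - X : Polynomial F).roots
            = (X ^ q - X : Polynomial F).natDegree := by
          rw [hr, FiniteField.X_pow_card_sub_X_natDegree_eq F hq2, ← hq]
          simp [Finset.card_univ]
        have := prod_multiset_X_sub_C_of_monic_of_roots_card_eq hm hc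
        rw [hr] at this
        exact this
      have hdvd : (X ^ q - X : Polynomial F) ∣ f - C (f.coeff 0) := by
        rw [← hprod]
        exact (Multiset.prod_X_sub_C_dvd_iff_le_roots h0 _).mpr hle
      obtain ⟨h, hh⟩ := hdvd
      have hfeq : f = (X ^ q - X) * h + C (f.coeff 0) := by
        rw [← hh]; ring
      have hne : h ≠ 0 := by
        intro h'
        rw [h', mul_zero] at hh
        exact h0 hh
      have hinvh : ∀ c : F, h.comp (X + C c) = h := by
        intro c
        have h1 := hinv c
        rw [hfeq, add_comp, mul_comp, C_comp, aux_s_comp hq hcard] at h1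
        have h2 : (X ^ q - X) * h.comp (X + C c) = (X ^ q - X) * h := by
          have := add_right_cancel h1
          exact this
        exact mul_left_cancel₀ (aux_s_ne hq) h2
      have hdegh : h.natDegree < N := by
        have hnd : f.natDegree = q + h.natDegree := by
          have : (f - C (f.coeff 0)).natDegree = f.natDegree := by
            rw [sub_eq_add_neg, ← C_neg, natDegree_add_C]
          rw [← this, hh, natDegree_mul (aux_s_ne hq) hne,
            FiniteField.X_pow_card_sub_X_natDegree_eq F hq2]
        omega
      obtain ⟨g, hg⟩ := ih h.natDegree hdegh h le_rfl hinvh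
      refine ⟨X * g + C (f.coeff 0), ?_⟩
      rw [add_comp, mul_comp, X_comp, C_comp, ← hg, ← hh]
      ring

lemma aux_primefield {p : ℕ} [hp : Fact p.Prime] [CharP F p] (x : F) (hx : x ^ p = x) :
    ∃ k : ℕ, x = (k : F) := by
  haveI : NeZero p := ⟨hp.out.ne_zero⟩
  set φ : ZMod p →+* F := ZMod.castHom dvd_rfl F with hφ
  set s : Multiset F := (Finset.univ.val : Multiset (ZMod p)).map φ with hs
  have hnodup : s.Nodup := Multiset.Nodup.map φ.injective Finset.univ.nodup
  have hne : (X ^ p - X : Polynomial F) ≠ 0 :=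
    FiniteField.X_pow_card_sub_X_ne_zero F hp.out.one_lt
  have hsub : s ≤ (X ^ p - X : Polynomial F).roots := by
    rw [Multiset.le_iff_subset hnodup]
    intro y hy
    obtain ⟨k, _, rfl⟩ := Multiset.mem_map.mp hy
    rw [mem_roots hne]
    simp [IsRoot, ← map_pow, ZMod.pow_card]
  have hxroot : x ∈ (X ^ p - X : Polynomial F).roots := by
    rw [mem_roots hne]
    simp [IsRoot, hx]
  have hxs : x ∈ s := by
    by_contra hxs
    have hsub2 : (x ::ₘ s) ≤ (X ^ p - X : Polynomial F).roots := by
      rw [Multiset.le_iff_subset (Multiset.nodup_cons.mpr ⟨hxs, hnodup⟩)]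
      intro y hy
      rcases Multiset.mem_cons.mp hy with rfl | hy
      · exact hxroot
      · exact (Multiset.le_iff_subset hnodup).mp hsub hy
    have hcard := Multiset.card_le_card hsub2
    have hcard2 : Multiset.card (X ^ p - X : Polynomial F).roots
        ≤ (X ^ p - X : Polynomial F).natDegree := card_roots' _
    rw [FiniteField.X_pow_card_sub_X_natDegree_eq F hp.out.one_lt] at hcard2
    have hcs : Multiset.card (x ::ₘ s) = p + 1 := by
      simp [hs, ZMod.card]
    omega
  obtain ⟨k, _, hk⟩ := Multiset.mem_map.mp hxs
  refine ⟨k.val, ?_⟩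
  rw [← hk, ← map_natCast φ k.val, ZMod.natCast_val, ZMod.cast_id]

end Aux

/-- For each `n ≥ 0` there is a unique polynomial `g_{n,q}` with prime-field coefficients
satisfying `∑_{c ∈ F_q} (X+c)^n = g_{n,q}(X^q − X)`, and for `a ≥ b ≥ 0` one has
`g_{n+q^a,q} − g_{n+q^b,q} = (S_a − S_b)·g_{n,q}` where `S_a = X + X^q + ⋯ + X^{q^{a−1}}`. -/
theorem stmt10 (F : Type*) [Field F] [Fintype F] (q : ℕ) (hq : Fintype.card F = q) :
    (∀ n : ℕ, ∃! g : Polynomial F,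
      (∀ i, ∃ k : ℕ, g.coeff i = (k : F)) ∧
      ∑ c : F, (X + C c) ^ n = g.comp (X ^ q - X)) ∧
    (∀ (n a b : ℕ), b ≤ a → ∀ g₁ g₂ g₃ : Polynomial F,
      (∑ c : F, (X + C c) ^ (n + q ^ a) = g₁.comp (X ^ q - X)) →
      (∑ c : F, (X + C c) ^ (n + q ^ b) = g₂.comp (X ^ q - X)) →
      (∑ c : F, (X + C c) ^ n = g₃.comp (X ^ q - X)) →
      g₁ - g₂ =
        ((∑ i ∈ Finset.range a, X ^ q ^ i) - ∑ i ∈ Finset.range b, X ^ q ^ i) * g₃) := by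
  classical
  obtain ⟨p, hcp⟩ := CharP.exists F
  haveI := hcp
  obtain ⟨e, hp, hcard⟩ := FiniteField.card F p
  haveI : Fact p.Prime := ⟨hp⟩
  rw [hq] at hcard
  -- frobenius fixes the sums
  have hfrobsum : ∀ n : ℕ, Polynomial.map (frobenius F p) (∑ c : F, (X + C c) ^ n)
      = ∑ c : F, (X + C c) ^ n := by
    intro n
    rw [Polynomial.map_sum]
    simp only [Polynomial.map_pow, Polynomial.map_add, map_X, map_C]
    exact Fintype.sum_bijective (frobenius F p)
      (Finite.injective_iff_bijective.mp (frobenius F p).injective)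
      _ _ (fun c => rfl)
  -- invariance of the sums
  have hinvsum : ∀ (n : ℕ) (a : F),
      (∑ c : F, (X + C c) ^ n).comp (X + C a) = ∑ c : F, (X + C c) ^ n := by
    intro n a
    rw [Polynomial.sum_comp]
    simp only [pow_comp, add_comp, X_comp, C_comp]
    calc ∑ c : F, (X + C a + C c) ^ n = ∑ c : F, (X + C (a + c)) ^ n := by
          simp [C_add, add_assoc]
      _ = ∑ c : F, (X + C c) ^ n :=
          Fintype.sum_bijective (fun c => a + c) (Equiv.addLeft a).bijective _ _ (fun c => rfl)
  -- telescoping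
  have hSa : ∀ a : ℕ, ((∑ i ∈ Finset.range a, X ^ q ^ i : Polynomial F)).comp (X ^ q - X)
      = X ^ q ^ a - X := by
    intro a
    rw [Polynomial.sum_comp]
    simp only [pow_comp, X_comp]
    have h1 : ∀ i : ℕ, ((X ^ q - X : Polynomial F)) ^ q ^ i
        = X ^ q ^ (i + 1) - X ^ q ^ i := by
      intro i
      have h2 : q ^ i = p ^ (e * i) := by rw [hcard, ← pow_mul]
      rw [h2, sub_pow_char_pow, ← h2, ← pow_mul, ← pow_succ']
    calc ∑ i ∈ Finset.range a, ((X ^ q - X : Polynomial F)) ^ q ^ i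
        = ∑ i ∈ Finset.range a, ((X : Polynomial F) ^ q ^ (i + 1) - X ^ q ^ i) := by
          exact Finset.sum_congr rfl fun i _ => h1 i
      _ = X ^ q ^ a - X ^ q ^ 0 := Finset.sum_range_sub (fun i => (X : Polynomial F) ^ q ^ i) a
      _ = X ^ q ^ a - X := by rw [pow_zero, pow_one]
  -- the shift identity
  have hshift : ∀ (n a : ℕ) (c : F), (X + C c) ^ (n + q ^ a)
      = (X + C c) ^ n * (X ^ q ^ a + C c) := by
    intro n a c
    rw [pow_add]
    congr 1
    have h2 : q ^ a = p ^ (e * a) := by rw [hcard, ← pow_mul]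
    rw [h2, add_pow_char_pow, ← h2, ← C_pow, ← hq, FiniteField.pow_card_pow]
  constructor
  · intro n
    obtain ⟨g, hg⟩ := aux_exists hq hcard (∑ c : F, (X + C c) ^ n).natDegree
      (∑ c : F, (X + C c) ^ n) le_rfl (hinvsum n)
    have hmapg : Polynomial.map (frobenius F p) g = g := by
      apply aux_comp_inj hq (g₂ := g)
      have : (Polynomial.map (frobenius F p) g).comp (X ^ q - X)
          = Polynomial.map (frobenius F p) (g.comp (X ^ q - X)) := by
        rw [Polynomial.map_comp]
        congr 1
        simp [Polynomial.map_sub, Polynomial.map_pow]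
      rw [this, ← hg, hfrobsum n, hg]
    refine ⟨g, ⟨?_, hg⟩, ?_⟩
    · intro i
      apply aux_primefield (p := p)
      have := congrArg (fun P => Polynomial.coeff P i) hmapg
      simpa [coeff_map, frobenius_def] using this
    · rintro g' ⟨-, hg'⟩
      exact aux_comp_inj hq (by rw [← hg', ← hg])
  · intro n a b hba g₁ g₂ g₃ h₁ h₂ h₃
    apply aux_comp_inj hq
    rw [sub_comp, ← h₁, ← h₂, mul_comp, sub_comp, hSa a, hSa b, ← h₃]
    calc ∑ c : F, (X + C c) ^ (n + q ^ a) - ∑ c : F, (X + C c) ^ (n + q ^ b)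
        = ∑ c : F, ((X + C c) ^ n * (X ^ q ^ a + C c)
            - (X + C c) ^ n * (X ^ q ^ b + C c)) := by
          rw [Finset.sum_sub_distrib]
          congr 1 <;> exact Finset.sum_congr rfl fun c _ => hshift _ _ c
      _ = ∑ c : F, (X ^ q ^ a - X ^ q ^ b) * (X + C c) ^ n := by
          exact Finset.sum_congr rfl fun c _ => by ring
      _ = (X ^ q ^ a - X ^ q ^ b) * ∑ c : F, (X + C c) ^ n := by
          rw [Finset.mul_sum]
      _ = (X ^ q ^ a - X - (X ^ q ^ b - X)) * ∑ c : F, (X + C c) ^ n := by ring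
end

section
/- Let q be a prime power, n = 1 + q^{a₁} + ... + q^{a_{q+t}} with −1 ≤ t ≤ q−4 and a₁,...,a_{q+t} ≥ 0. Then g_{n,q} = − Σ_{1 ≤ i₁ < ... < i_{t+2} ≤ q+t} S_{a_{i₁}} ··· S_{a_{i_{t+2}}}. -/
/-!
Both sides are compared after composing with `X ^ q - X`, which is injective. Put
`Y i = X ^ q ^ a i` and let `e j` be the elementary symmetric functions of the `Y i`.
By Frobenius `(X + c) ^ n = (X + c) * ∏ i, (Y i + c)`, and summing over `c` kills every power
sum `∑ c, c ^ m` in the relevant range except `m = q - 1`, where it is `-1`; what remains is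
`-(X * e (k - 1) + e k)`. On the other side `S_b (X ^ q - X) = X ^ q ^ b - X` telescopes, so
the candidate becomes `-∑_{#s = k} ∏ i ∈ s, (Y i - X)`, that is
`-∑ j, (N - j).choose (k - j) * e j * (-X) ^ (k - j)`. For `j ≤ k - 2` the binomial is
`(q + r).choose m` with `r < m < q`, which vanishes in characteristic `p` because
`(1 + X) ^ (q + r) = (1 + X ^ q) * (1 + X) ^ r`.
-/

open Polynomial Finset

section

variable {ι R : Type*} [DecidableEq ι] [CommSemiring R]

theorem Finset.prod_add_const (s : Finset ι) (f : ι → R) (x : R) :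
    ∏ i ∈ s, (f i + x) = ∑ j ∈ range (#s + 1), (s.val.map f).esymm j * x ^ (#s - j) := by
  rw [prod_add, sum_powerset]
  refine sum_congr rfl fun j _ => ?_
  rw [esymm_map_val, sum_mul]
  refine sum_congr rfl fun T hT => ?_
  rw [prod_const, card_sdiff_of_subset (mem_powersetCard.1 hT).1, (mem_powersetCard.1 hT).2]

theorem Finset.sum_powersetCard_sum_powersetCard {M : Type*} [AddCommMonoid M]
    (s : Finset ι) (g : Finset ι → M) {j k : ℕ} (hjk : j ≤ k) :
    ∑ t ∈ s.powersetCard k, ∑ T ∈ t.powersetCard j, g T =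
      (#s - j).choose (k - j) • ∑ T ∈ s.powersetCard j, g T := by
  rw [sum_comm' (t' := s.powersetCard j) (s' := fun T => (s.powersetCard k).filter (T ⊆ ·))]
  · rw [smul_sum]
    refine sum_congr rfl fun T hT => ?_
    obtain ⟨hTs, hTj⟩ := mem_powersetCard.1 hT
    rw [sum_const, card_filter_powersetCard_subset T s k hTs (hTj ▸ hjk), hTj]
  · intro t T
    simp only [mem_powersetCard, mem_filter]
    constructor
    · rintro ⟨⟨hts, htk⟩, hTt, hTj⟩
      exact ⟨⟨⟨hts, htk⟩, hTt⟩, hTt.trans hts, hTj⟩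
    · rintro ⟨⟨⟨hts, htk⟩, hTt⟩, -, hTj⟩
      exact ⟨⟨hts, htk⟩, hTt, hTj⟩

theorem Finset.sum_powersetCard_prod_add_const (s : Finset ι) (f : ι → R) (x : R) (k : ℕ) :
    ∑ t ∈ s.powersetCard k, ∏ i ∈ t, (f i + x) =
      ∑ j ∈ range (k + 1),
        ((#s - j).choose (k - j) : R) * (s.val.map f).esymm j * x ^ (k - j) := by
  calc ∑ t ∈ s.powersetCard k, ∏ i ∈ t, (f i + x)
      = ∑ t ∈ s.powersetCard k, ∑ j ∈ range (k + 1),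
          (∑ T ∈ t.powersetCard j, ∏ i ∈ T, f i) * x ^ (k - j) := by
        refine sum_congr rfl fun t ht => ?_
        simp only [prod_add_const, esymm_map_val, (mem_powersetCard.1 ht).2]
    _ = _ := by
        rw [sum_comm]
        refine sum_congr rfl fun j hj => ?_
        rw [← sum_mul, sum_powersetCard_sum_powersetCard s _ (Nat.lt_succ_iff.1 (mem_range.1 hj)),
          nsmul_eq_mul, esymm_map_val]

end

namespace FiniteField

variable {F : Type*} [Field F] [Fintype F]

local notation "q" => Fintype.card F

theorem expand_card_pow (f : F[X]) (a : ℕ) : expand F (q ^ a) f = f ^ q ^ a := by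
  induction a with
  | zero => simp
  | succ a ih => rw [pow_succ, expand_mul, expand_card, map_pow, ih, ← pow_mul, ← pow_succ]

theorem X_add_C_pow_card_pow (c : F) (a : ℕ) : (X + C c) ^ q ^ a = X ^ q ^ a + C c := by
  rw [← expand_card_pow, map_add, expand_X, expand_C]

theorem sum_X_pow_card_pow_comp (b : ℕ) :
    (∑ j ∈ range b, (X : F[X]) ^ q ^ j).comp (X ^ q - X) = X ^ q ^ b - X := by
  have step (j : ℕ) : ((X : F[X]) ^ q ^ j).comp (X ^ q - X) = X ^ q ^ (j + 1) - X ^ q ^ j := by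
    rw [X_pow_comp, ← expand_card_pow, map_sub, map_pow, expand_X, ← pow_mul, ← pow_succ]
  rw [Polynomial.sum_comp, sum_congr rfl fun j _ => step j,
    sum_range_sub (fun j => (X : F[X]) ^ q ^ j), pow_zero, pow_one]

theorem comp_X_pow_card_sub_X_injective :
    Function.Injective fun f : F[X] => f.comp (X ^ q - X) := by
  intro f g hfg
  have hdeg : (X ^ q - X : F[X]).natDegree = q :=
    X_pow_card_sub_X_natDegree_eq F Fintype.one_lt_card
  have hcomp : (f - g).comp (X ^ q - X) = 0 := by
    rw [sub_comp, sub_eq_zero]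
    exact hfg
  rcases comp_eq_zero_iff.1 hcomp with h | ⟨-, h⟩
  · exact sub_eq_zero.1 h
  · rw [h, natDegree_C] at hdeg
    exact absurd hdeg.symm Fintype.card_ne_zero

theorem sum_pow_eq_ite {m : ℕ} (hm : m < 2 * (q - 1)) :
    ∑ c : F, c ^ m = if m = q - 1 then -1 else 0 := by
  classical
  rcases lt_or_ge m (q - 1) with hlt | hge
  · rw [sum_pow_lt_card_sub_one F m hlt, if_neg hlt.ne]
  have hm0 : m ≠ 0 := by have := Fintype.one_lt_card (α := F); omega
  have hunits : ∑ c : F, c ^ m = ∑ c : Fˣ, (c : F) ^ m :=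
    calc ∑ c : F, c ^ m = ∑ c ∈ univ.filter (· ≠ 0), c ^ m :=
          (sum_filter_of_ne fun c _ h => by rintro rfl; exact h (zero_pow hm0)).symm
      _ = ∑ c : {c : F // c ≠ 0}, (c : F) ^ m := sum_subtype _ (by simp) _
      _ = ∑ c : Fˣ, (c : F) ^ m := (Fintype.sum_equiv unitsEquivNeZero _ _ fun _ => rfl).symm
  have hdvd : q - 1 ∣ m ↔ m = q - 1 :=
    ⟨fun h => Nat.eq_of_dvd_of_lt_two_mul hm0 h hm, fun h => h ▸ dvd_rfl⟩
  simp only [hunits, sum_pow_units, hdvd]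

theorem cast_choose_card_add_eq_zero {r m : ℕ} (hrm : r < m) (hmq : m < q) :
    (((q + r).choose m : ℕ) : F) = 0 := by
  rw [← coeff_X_add_one_pow, pow_add, ← expand_card, map_add, expand_X, map_one, add_mul,
    one_mul, coeff_add, coeff_X_pow_mul', if_neg (by omega), coeff_X_add_one_pow,
    Nat.choose_eq_zero_of_lt hrm, Nat.cast_zero, zero_add]

variable {ι : Type*} [DecidableEq ι]

theorem sum_add_C_mul_prod_add_C (z : F[X]) (s : Finset ι) (Y : ι → F[X]) {k : ℕ}
    (hs : #s + 2 = q + k) (hk : 1 ≤ k) (hkq : k + 2 ≤ q) :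
    ∑ c : F, (z + C c) * ∏ i ∈ s, (Y i + C c) =
      -(z * (s.val.map Y).esymm (k - 1) + (s.val.map Y).esymm k) := by
  set E := fun j => (s.val.map Y).esymm j
  have hsum (j : ℕ) (hj : j ≤ #s) :
      (∑ c : F, c ^ (#s - j) = if j = k - 1 then -1 else 0) ∧
        ∑ c : F, c ^ (#s - j + 1) = if j = k then -1 else 0 := by
    rw [sum_pow_eq_ite (by omega), sum_pow_eq_ite (by omega)]
    exact ⟨if_congr (by omega) rfl rfl, if_congr (by omega) rfl rfl⟩
  calc ∑ c : F, (z + C c) * ∏ i ∈ s, (Y i + C c)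
      = ∑ j ∈ range (#s + 1),
          E j * (z * C (∑ c : F, c ^ (#s - j)) + C (∑ c : F, c ^ (#s - j + 1))) := by
        simp only [prod_add_const, mul_sum, map_sum, ← sum_add_distrib]
        rw [sum_comm]
        refine sum_congr rfl fun j _ => sum_congr rfl fun c _ => ?_
        simp only [C_pow, E]
        ring
    _ = E (k - 1) * (z * C (-1)) + E k * C (-1) := by
        rw [sum_eq_add_of_mem (k - 1) k (by simp; omega) (by simp; omega) (by omega)]
        · obtain ⟨h1, h2⟩ := hsum (k - 1) (by omega)
          obtain ⟨h3, h4⟩ := hsum k (by omega)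
          rw [h1, h2, h3, h4, if_pos rfl, if_neg (by omega), if_neg (by omega), if_pos rfl]
          simp
        · intro j hj hne
          obtain ⟨h1, h2⟩ := hsum j (Nat.lt_succ_iff.1 (mem_range.1 hj))
          rw [h1, h2, if_neg hne.1, if_neg hne.2]
          simp
    _ = _ := by simp only [map_neg, map_one]; ring

theorem sum_powersetCard_prod_comp (s : Finset ι) (a : ι → ℕ) {k : ℕ}
    (hs : #s + 2 = q + k) (hk : 1 ≤ k) (hkq : k < q) :
    (∑ t ∈ s.powersetCard k, ∏ i ∈ t, ∑ j ∈ range (a i), (X : F[X]) ^ q ^ j).comp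
        (X ^ q - X) =
      X * (s.val.map fun i => X ^ q ^ a i).esymm (k - 1) +
        (s.val.map fun i => X ^ q ^ a i).esymm k := by
  have hfactor (i : ι) :
      (∑ j ∈ range (a i), (X : F[X]) ^ q ^ j).comp (X ^ q - X) = X ^ q ^ a i + -X := by
    rw [sum_X_pow_card_pow_comp, sub_eq_add_neg]
  simp only [Polynomial.sum_comp, Polynomial.prod_comp, hfactor]
  rw [sum_powersetCard_prod_add_const, sum_eq_add_of_mem (k - 1) k (by simp) (by simp)
    (by omega)]
  · have hq1 : #s - (k - 1) = q - 1 := by omega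
    have hcast : (((q - 1).choose 1 : ℕ) : F[X]) = -1 := by
      rw [Nat.choose_one_right, Nat.cast_sub Fintype.card_pos, Nat.cast_one,
        ← map_natCast C, cast_card_eq_zero, map_zero, zero_sub]
    rw [hq1, show k - (k - 1) = 1 by omega, hcast, Nat.sub_self, Nat.choose_zero_right]
    ring
  · intro j hj hne
    have hjk : j + 2 ≤ k := by simp at hj; omega
    rw [show #s - j = q + (k - 2 - j) by omega, ← map_natCast C,
      cast_choose_card_add_eq_zero (by omega) (by omega), map_zero, zero_mul, zero_mul]

end FiniteField

open FiniteField in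
/-- If `n = 1 + q^{a₁} + ⋯ + q^{a_{q+t}}` with `−1 ≤ t ≤ q−4`, then
`g_{n,q} = − ∑_{1 ≤ i₁ < ⋯ < i_{t+2} ≤ q+t} S_{a_{i₁}} ⋯ S_{a_{i_{t+2}}}`,
where `g_{n,q}` is defined by `∑_{c ∈ F_q}(X+c)^n = g_{n,q}(X^q − X)` and
`S_a = X + X^q + ⋯ + X^{q^{a−1}}`. -/
theorem stmt11 (F : Type*) [Field F] [Fintype F] (q : ℕ) (hq : Fintype.card F = q)
    (t : ℤ) (ht1 : -1 ≤ t) (ht2 : t ≤ (q : ℤ) - 4)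
    (N : ℕ) (hN : (N : ℤ) = (q : ℤ) + t)
    (k : ℕ) (hk : (k : ℤ) = t + 2)
    (a : Fin N → ℕ)
    (n : ℕ) (hn : n = 1 + ∑ i : Fin N, q ^ a i)
    (g : Polynomial F)
    (hg : ∑ c : F, (X + C c) ^ n = g.comp (X ^ q - X)) :
    g = - ∑ s ∈ Finset.powersetCard k (Finset.univ : Finset (Fin N)),
          ∏ i ∈ s, ∑ j ∈ Finset.range (a i), X ^ q ^ j := by
  classical
  subst hq
  have hcard : #(univ : Finset (Fin N)) + 2 = Fintype.card F + k := by
    rw [card_univ, Fintype.card_fin]; omega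
  apply comp_X_pow_card_sub_X_injective
  simp only [← hg, neg_comp, sum_powersetCard_prod_comp _ a hcard (by omega) (by omega), hn,
    pow_add, pow_one, ← prod_pow_eq_pow_sum, X_add_C_pow_card_pow]
  exact sum_add_C_mul_prod_add_C X _ _ hcard (by omega) (by omega)
end

section
/- Let r be a prime power, m, e positive integers, q = r^m, and S_e = X + X^q + ... + X^{q^{e−1}}. Let f ∈ F_{q^e}[X]. Suppose: (i) there is a permutation polynomial f̄ of F_q with S_e(f(x)) = f̄(S_e(x)) for all x ∈ F_{q^e}; (ii) for each c ∈ F_q there exist q-linearized f_{c,i} ∈ F_r[X], a_{c,i} ∈ F_q (0 ≤ i ≤ m−1) and b_c ∈ F_{q^e} with f(x) = Σᵢ a_{c,i} f_{c,i}(x)^{r^i} + b_c for all x with S_e(x) = c; (iii) for each c, gcd(det A_c, (X^e−1)/(X−1)) = 1 in F_q[X], where A_c is the m×m matrix with (i,j) entry a_{c,j−i}^{r^i} · f̃_{c,j−i} · X^{δ(i,j)/m} (i.e., entry a_{c,j−i}^{r^i} f̃_{c,j−i} multiplied by X when i > j), with f̃ the conventional associate and subscripts mod m. Then f is a permutation polynomial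 of F_{q^e}. -/
/-!
Because `S_e` is the trace of `F_{q^e}/F_q` and `f̄` permutes `F_q`, `f(x) = f(y)` puts `x` and
`y` in one fiber `S_e⁻¹(c)`, so `z = x - y` satisfies `S_e(z) = 0` and
`∑ᵢ a_{c,i} f_{c,i}(z)^{r^i} = 0`.
View `F_{q^e}` as an `F_q[X]`-module in which `X` acts as `x ↦ x^q`; a `q`-linearized polynomial
then acts through its conventional associate and `S_e(z) = 0` says `(X^e - 1)/(X - 1)` kills `z`.
Raising the relation to the powers `r^j` (`j < m`) gives a linear system with matrix `A_c` in the
unknowns `z^{r^s}`, so `det A_c` kills `z` as well, and coprimality forces `z = 0`.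
-/

open Polynomial Finset FiniteField

theorem Subfield.mem_iff_pow_card_eq_self {F : Type*} [Field F] (L : Subfield F) [Fintype L]
    {x : F} : x ∈ L ↔ x ^ Fintype.card L = x := by
  have hsplit : Splits (X ^ Fintype.card L - X : L[X]) := by
    rw [splits_iff_card_roots, roots_X_pow_card_sub_X, ← Finset.card_def, Finset.card_univ,
      X_pow_card_sub_X_natDegree_eq _ Fintype.one_lt_card]
  have := roots_X_pow_card_sub_X L ▸ hsplit.roots_map L.subtype ▸ Multiset.mem_map (b := x)
  simpa [sub_eq_zero, iff_comm, X_pow_card_sub_X_ne_zero F Fintype.one_lt_card] using this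

theorem Matrix.det_smul_eq_zero_of_sum_smul_eq_zero {ι R M : Type*} [Fintype ι] [DecidableEq ι]
    [CommRing R] [AddCommGroup M] [Module R M] (B : Matrix ι ι R) (w : ι → M)
    (h : ∀ i, ∑ j, B i j • w j = 0) (k : ι) : B.det • w k = 0 := by
  calc B.det • w k = ∑ j, (B.adjugate * B) k j • w j := by
        simp [Matrix.adjugate_mul, Matrix.one_apply]
    _ = ∑ i, B.adjugate k i • ∑ j, B i j • w j := by
        simp only [Matrix.mul_apply, Finset.sum_smul, Finset.smul_sum, mul_smul]
        exact Finset.sum_comm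
    _ = 0 := by simp [h]

theorem eq_zero_of_sum_smul_eq_zero_of_isCoprime_det {ι R M : Type*} [Fintype ι] [DecidableEq ι]
    [CommRing R] [AddCommGroup M] [Module R M] {B : Matrix ι ι R} {w : ι → M} {P : R} {k : ι}
    (h : ∀ i, ∑ j, B i j • w j = 0) (hP : P • w k = 0) (hcop : IsCoprime B.det P) :
    w k = 0 := by
  obtain ⟨u, v, huv⟩ := hcop
  calc w k = (u * B.det + v * P) • w k := by rw [huv, one_smul]
    _ = 0 := by rw [add_smul, mul_smul, mul_smul, B.det_smul_eq_zero_of_sum_smul_eq_zero w h, hP,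
      smul_zero, smul_zero, add_zero]

theorem pow_pow_val_add {M : Type*} [Monoid M] {m : ℕ} [NeZero m] (t : M) (r : ℕ) (i j : ZMod m) :
    t ^ r ^ (i.val + j.val) =
      if j.val ≤ (i + j).val then t ^ r ^ (i + j).val else (t ^ r ^ (i + j).val) ^ r ^ m := by
  rcases lt_or_ge (i.val + j.val) m with h | h
  · rw [if_pos (by rw [ZMod.val_add_of_lt h]; omega), ZMod.val_add_of_lt h]
  · have hsum := ZMod.val_add_val_of_le h
    have hlt := ZMod.val_lt i
    rw [if_neg (by omega), ← pow_mul, ← pow_add, hsum]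

namespace FiniteField

variable (K R : Type*) [Field K] [Fintype K] [CommRing R] [Algebra K R]

theorem frobeniusAlgHom_pow_apply (n : ℕ) (x : R) :
    (frobeniusAlgHom K R ^ n) x = x ^ Fintype.card K ^ n := by
  rw [AlgHom.coe_pow, coe_frobeniusAlgHom, pow_iterate]

theorem frobeniusAlgHom_toLinearMap_pow_apply (n : ℕ) (x : R) :
    ((frobeniusAlgHom K R).toLinearMap ^ n) x = x ^ Fintype.card K ^ n := by
  rw [Module.End.pow_apply, AlgHom.coe_toLinearMap, coe_frobeniusAlgHom, pow_iterate]

theorem sub_pow_card_pow (n : ℕ) (x y : R) :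
    (x - y) ^ Fintype.card K ^ n = x ^ Fintype.card K ^ n - y ^ Fintype.card K ^ n := by
  simpa [frobeniusAlgHom_pow_apply] using map_sub (frobeniusAlgHom K R ^ n) x y

variable {K R}

theorem aeval_frobeniusAlgHom_apply (g : K[X]) (x : R) :
    aeval (frobeniusAlgHom K R).toLinearMap g x =
      ∑ k ∈ range (g.natDegree + 1), algebraMap K R (g.coeff k) * x ^ Fintype.card K ^ k := by
  simp [aeval_eq_sum_range, LinearMap.sum_apply, frobeniusAlgHom_toLinearMap_pow_apply,
    Algebra.smul_def]

theorem map_aeval_frobeniusAlgHom (σ : R →+* R) {g : K[X]}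
    (hg : ∀ k, σ (algebraMap K R (g.coeff k)) = algebraMap K R (g.coeff k)) (x : R) :
    σ (aeval (frobeniusAlgHom K R).toLinearMap g x) =
      aeval (frobeniusAlgHom K R).toLinearMap g (σ x) := by
  simp [aeval_frobeniusAlgHom_apply, hg]

end FiniteField

/-- The matrix `A_c` of the paper. Row `i` is the `r^i`-th power of `∑ₛ a_s g_s(z)^{r^s}` written
in the unknowns `z^{r^j}`; the factor `X` accounts for `z^{r^{j+m}} = (z^{r^j})^q`. -/
noncomputable def twistMatrix {R : Type*} [CommSemiring R] (m r : ℕ) (a : ZMod m → R)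
    (g : ZMod m → R[X]) : Matrix (ZMod m) (ZMod m) R[X] :=
  Matrix.of fun i j => C (a (j - i) ^ r ^ i.val) * g (j - i) * if i.val ≤ j.val then 1 else X

theorem twistMatrix_map {R S : Type*} [CommSemiring R] [CommSemiring S] (f : R →+* S) (m r : ℕ)
    (a : ZMod m → R) (g : ZMod m → R[X]) :
    (twistMatrix m r a g).map (Polynomial.map f) =
      twistMatrix m r (fun i => f (a i)) (fun i => (g i).map f) := by
  ext1 i j
  simp [twistMatrix, apply_ite (Polynomial.map f)]

theorem Subfield.le_of_card_eq_card_pow {E : Type*} [Field E] {K L : Subfield E} [Fintype K]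
    [Fintype L] {m : ℕ} (h : Fintype.card L = Fintype.card K ^ m) : K ≤ L := fun x hx => by
  rw [L.mem_iff_pow_card_eq_self, h, ← frobeniusAlgHom_pow_apply]
  exact (frobeniusAlgHom K E ^ m).commutes ⟨x, hx⟩

theorem FiniteField.sum_pow_card_pow_eq_algebraMap_trace {F E : Type*} [Field F] [Fintype F]
    [Field E] [Fintype E] [Algebra F E] {e : ℕ} (hE : Fintype.card E = Fintype.card F ^ e)
    (x : E) : ∑ i ∈ range e, x ^ Fintype.card F ^ i = algebraMap F E (Algebra.trace F E x) := by
  have he : Module.finrank F E = e := by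
    refine Nat.pow_right_injective (Fintype.one_lt_card (α := F)) ?_
    simp only [← Module.card_eq_pow_finrank, hE]
  rw [algebraMap_trace_eq_sum_pow, he, Nat.card_eq_fintype_card]

section Twist

variable {E : Type*} [Field E] {K L : Subfield E} [Fintype K] [Fintype L] {r m : ℕ}

/- `Module.AEval' τ` is `E` as an `L[X]`-module in which `X` acts as `x ↦ x ^ q`; there `g • z` is
the `q`-linearized polynomial with conventional associate `g`, evaluated at `z`. -/
local notation "τ" => AlgHom.toLinearMap (frobeniusAlgHom L E)

theorem pow_aeval_frobeniusAlgHom (hK : Fintype.card K = r) {g : L[X]}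
    (hg : ∀ k, (g.coeff k : E) ∈ K) (j : ℕ) (x : E) :
    aeval τ g x ^ r ^ j = aeval τ g (x ^ r ^ j) := by
  have := map_aeval_frobeniusAlgHom (g := g) ((frobeniusAlgHom K E ^ j : E →ₐ[K] E) : E →+* E)
    (fun k => (frobeniusAlgHom K E ^ j).commutes ⟨_, hg k⟩) x
  simpa [frobeniusAlgHom_pow_apply, hK] using this

theorem sum_twistMatrix_smul_eq_zero [NeZero m] (hK : Fintype.card K = r)
    (hL : Fintype.card L = r ^ m) {a : ZMod m → L} {g : ZMod m → L[X]}
    (hg : ∀ i k, ((g i).coeff k : E) ∈ K) {z : E}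
    (hz : ∑ i, (a i : E) * aeval τ (g i) z ^ r ^ i.val = 0) (j : ZMod m) :
    ∑ s, twistMatrix m r a g j s • Module.AEval'.of τ (z ^ r ^ s.val) = 0 := by
  have hterm : ∀ i, twistMatrix m r a g j (i + j) • Module.AEval'.of τ (z ^ r ^ (i + j).val) =
      Module.AEval'.of τ ((a i : E) ^ r ^ j.val * aeval τ (g i) z ^ r ^ (i.val + j.val)) := by
    intro i
    rw [pow_aeval_frobeniusAlgHom hK (hg i), pow_pow_val_add]
    simp only [twistMatrix, Matrix.of_apply, add_sub_cancel_right, mul_smul]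
    split_ifs
    · rw [one_smul, ← Module.AEval.of_aeval_smul, Module.AEval.C_smul, ← map_smul]
      rfl
    · rw [Module.AEval'.X_smul_of, ← Module.AEval.of_aeval_smul, Module.AEval.C_smul, ← map_smul,
        AlgHom.toLinearMap_apply, coe_frobeniusAlgHom, hL]
      rfl
  calc ∑ s, twistMatrix m r a g j s • Module.AEval'.of τ (z ^ r ^ s.val)
      = ∑ i, twistMatrix m r a g j (i + j) • Module.AEval'.of τ (z ^ r ^ (i + j).val) :=
        (Fintype.sum_equiv (Equiv.addRight j) _ _ fun _ => rfl).symm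
    _ = Module.AEval'.of τ (∑ i, (frobeniusAlgHom K E ^ j.val)
          ((a i : E) * aeval τ (g i) z ^ r ^ i.val)) := by
        simp [hterm, frobeniusAlgHom_pow_apply, hK, mul_pow, ← pow_mul, pow_add]
    _ = 0 := by rw [← map_sum, hz, map_zero, map_zero]

theorem eq_zero_of_sum_mul_pow_aeval_eq_zero [NeZero m] (hK : Fintype.card K = r)
    (hL : Fintype.card L = r ^ m) {a : ZMod m → L} {g : ZMod m → L[X]}
    (hg : ∀ i k, ((g i).coeff k : E) ∈ K) {P : L[X]} (hcop : IsCoprime (twistMatrix m r a g).det P)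
    {z : E} (hz : ∑ i, (a i : E) * aeval τ (g i) z ^ r ^ i.val = 0) (hPz : aeval τ P z = 0) :
    z = 0 := by
  have h := eq_zero_of_sum_smul_eq_zero_of_isCoprime_det (k := 0)
    (sum_twistMatrix_smul_eq_zero hK hL hg hz) ?_ hcop
  · simpa using h
  · simp [← Module.AEval.of_aeval_smul, hPz]

theorem eq_of_sum_mul_pow_eval_eq [NeZero m] (hK : Fintype.card K = r)
    (hL : Fintype.card L = r ^ m) {n e : ℕ} {c : ZMod m → ℕ → E} {a : ZMod m → E}
    (hc : ∀ i k, c i k ∈ K) (ha : ∀ i, a i ∈ L)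
    (hcop : IsCoprime (twistMatrix m r a fun i => ∑ k ∈ range n, C (c i k) * X ^ k).det
      (∑ i ∈ range e, X ^ i))
    {x y : E} (htr : ∑ i ∈ range e, x ^ (r ^ m) ^ i = ∑ i ∈ range e, y ^ (r ^ m) ^ i)
    (hxy : ∑ i, a i * ((∑ k ∈ range n, C (c i k) * X ^ (r ^ m) ^ k).eval x) ^ r ^ i.val =
      ∑ i, a i * ((∑ k ∈ range n, C (c i k) * X ^ (r ^ m) ^ k).eval y) ^ r ^ i.val) :
    x = y := by
  have hKL : K ≤ L := Subfield.le_of_card_eq_card_pow (by rw [hL, hK])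
  let a' : ZMod m → L := fun i => ⟨a i, ha i⟩
  let g : ZMod m → L[X] := fun i => ∑ k ∈ range n, C ⟨c i k, hKL (hc i k)⟩ * X ^ k
  let P : L[X] := ∑ i ∈ range e, X ^ i
  have hg_eval : ∀ i t, (∑ k ∈ range n, C (c i k) * X ^ (r ^ m) ^ k).eval t = aeval τ (g i) t :=
    fun i t => by
      simp [g, eval_finsetSum, LinearMap.sum_apply, frobeniusAlgHom_toLinearMap_pow_apply, hL,
        Subfield.smul_def]
  have hP_eval : ∀ t, aeval τ P t = ∑ i ∈ range e, t ^ (r ^ m) ^ i := fun t => by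
    simp [P, LinearMap.sum_apply, frobeniusAlgHom_toLinearMap_pow_apply, hL]
  have hg_coeff : ∀ i k, ((g i).coeff k : E) ∈ K := fun i k => by
    simp only [g, finsetSum_coeff, coeff_C_mul_X_pow, Finset.sum_ite_eq]
    split_ifs
    · exact hc i k
    · exact K.zero_mem
  have hcop' : IsCoprime (twistMatrix m r a' g).det P := by
    rw [← isCoprime_map L.subtype, ← coe_mapRingHom, RingHom.map_det, RingHom.mapMatrix_apply,
      coe_mapRingHom, twistMatrix_map]
    convert hcop using 2
    · simp [twistMatrix, a', g, Polynomial.map_sum]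
    · simp [P, Polynomial.map_sum]
  have hfrob : ∀ j (u v : E), (u - v) ^ r ^ j = u ^ r ^ j - v ^ r ^ j := hK ▸ sub_pow_card_pow K E
  refine sub_eq_zero.mp (eq_zero_of_sum_mul_pow_aeval_eq_zero hK hL hg_coeff hcop' ?_ ?_)
  · simp only [hg_eval] at hxy
    simp only [a', map_sub, hfrob, mul_sub, sum_sub_distrib, hxy, sub_self]
  · have hfrob_q : ∀ j (u v : E), (u - v) ^ (r ^ m) ^ j = u ^ (r ^ m) ^ j - v ^ (r ^ m) ^ j :=
      hL ▸ sub_pow_card_pow L E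
    rw [hP_eval]
    simp only [hfrob_q, sum_sub_distrib, htr, sub_self]

end Twist

theorem stmt12_general (r m e : ℕ) [NeZero m]
    (E : Type*) [Field E] [Fintype E] (hE : Fintype.card E = (r ^ m) ^ e)
    (K L : Subfield E) [Fintype K] [Fintype L]
    (hK : Fintype.card K = r) (hL : Fintype.card L = r ^ m)
    (Se : Polynomial E) (hSe : Se = ∑ i ∈ Finset.range e, X ^ (r ^ m) ^ i)
    (f : Polynomial E)
    (fbar : Polynomial E)
    (hbar_pp : Set.BijOn (fun x => fbar.eval x) ↑L ↑L)
    (hcomm : ∀ x : E, Se.eval (f.eval x) = fbar.eval (Se.eval x))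
    (hfiber : ∀ c ∈ L, ∃ (n : ℕ) (cc : ZMod m → ℕ → E) (ac : ZMod m → E) (b : E),
      (∀ i k, cc i k ∈ K) ∧ (∀ i, ac i ∈ L) ∧
      (∀ x : E, Se.eval x = c →
        f.eval x =
          (∑ i : ZMod m,
            ac i * ((∑ k ∈ Finset.range n, C (cc i k) * X ^ (r ^ m) ^ k).eval x) ^ r ^ i.val)
          + b) ∧
      IsCoprime
        (Matrix.det (Matrix.of fun i j : ZMod m =>
          C (ac (j - i) ^ r ^ i.val) * (∑ k ∈ Finset.range n, C (cc (j - i) k) * X ^ k) *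
            (if i.val ≤ j.val then 1 else X)))
        (∑ i ∈ Finset.range e, X ^ i)) :
    Function.Bijective fun x : E => f.eval x := by
  have hSe_eval : ∀ x, Se.eval x = ∑ i ∈ range e, x ^ (r ^ m) ^ i := by
    simp [hSe, eval_finsetSum]
  have hSe_mem : ∀ x, Se.eval x ∈ L := fun x => by
    rw [hSe_eval, ← hL, sum_pow_card_pow_eq_algebraMap_trace (by rw [hL, hE])]
    exact (Algebra.trace L E x).2
  rw [← Finite.injective_iff_bijective]
  intro x y (hxy : f.eval x = f.eval y)
  have hSexy : Se.eval x = Se.eval y :=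
    hbar_pp.injOn (hSe_mem x) (hSe_mem y) (by simp only [← hcomm, hxy])
  obtain ⟨n, cc, ac, b, hcc, hac, hfib, hcop⟩ := hfiber _ (hSe_mem x)
  refine eq_of_sum_mul_pow_eval_eq hK hL hcc hac hcop (by rwa [← hSe_eval, ← hSe_eval]) ?_
  exact add_right_cancel ((hfib x rfl).symm.trans (hxy.trans (hfib y hSexy.symm)))

/-- Proposition 3.1: a criterion for `f ∈ F_{q^e}[X]` to be a permutation polynomial of
`F_{q^e}`, where `q = r^m` and `S_e = X + X^q + ⋯ + X^{q^{e−1}}`.  Condition (i): `f`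
commutes with a permutation polynomial `f̄` of `F_q` via `S_e`.  Condition (ii): on each
fiber `S_e^{-1}(c)`, `f` agrees with `∑ᵢ a_{c,i} f_{c,i}^{r^i} + b_c` with `f_{c,i}`
being `q`-linearized over `F_r` and `a_{c,i} ∈ F_q`.  Condition (iii):
`gcd(det A_c, (X^e−1)/(X−1)) = 1`, where `A_c` has `(i,j)` entry
`a_{c,j−i}^{r^i}·f̃_{c,j−i}·X^{δ(i,j)/m}` (`f̃` the conventional associate, a factor of
`X` exactly when `i > j`).  Then `f` permutes `F_{q^e}`. -/
theorem stmt12 (r m e : ℕ) [NeZero m] (he : 0 < e) (hr : IsPrimePow r)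
    (E : Type*) [Field E] [Fintype E] (hE : Fintype.card E = (r ^ m) ^ e)
    (K L : Subfield E) [Fintype K] [Fintype L]
    (hK : Fintype.card K = r) (hL : Fintype.card L = r ^ m)
    (Se : Polynomial E) (hSe : Se = ∑ i ∈ Finset.range e, X ^ (r ^ m) ^ i)
    (f : Polynomial E)
    (fbar : Polynomial E)
    (hbar_coeff : ∀ i, fbar.coeff i ∈ L)
    (hbar_pp : Set.BijOn (fun x => fbar.eval x) ↑L ↑L)
    (hcomm : ∀ x : E, Se.eval (f.eval x) = fbar.eval (Se.eval x))
    (hfiber : ∀ c ∈ L, ∃ (n : ℕ) (cc : ZMod m → ℕ → E) (ac : ZMod m → E) (b : E),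
      (∀ i k, cc i k ∈ K) ∧ (∀ i, ac i ∈ L) ∧
      (∀ x : E, Se.eval x = c →
        f.eval x =
          (∑ i : ZMod m,
            ac i * ((∑ k ∈ Finset.range n, C (cc i k) * X ^ (r ^ m) ^ k).eval x) ^ r ^ i.val)
          + b) ∧
      IsCoprime
        (Matrix.det (Matrix.of fun i j : ZMod m =>
          C (ac (j - i) ^ r ^ i.val) * (∑ k ∈ Finset.range n, C (cc (j - i) k) * X ^ k) *
            (if i.val ≤ j.val then 1 else X)))
        (∑ i ∈ Finset.range e, X ^ i)) :
    Function.Bijective fun x : E => f.eval x :=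
  stmt12_general r m e E hE K L hK hL Se hSe f fbar hbar_pp hcomm hfiber
end

section
/- Let q = 4 and n = 1 + 3·q^a + q^e + 2·q^{e+a} with e, a positive integers. Then g_{n,q} ≡ X^{q^a} + S_e + S_a²S_e² + S_aS_e³ (mod X^{q^e} − X). If 2 | e and gcd(e, 2a+1) = 1, then g_{n,q} is a permutation polynomial of F_{q^e}. -/
/-!
Write `S_m(x) = ∑_{i<m} x^{4^i}`; in characteristic 2 this is additive and
`S_m(x^4 - x) = x^{4^m} - x`. For `c ∈ 𝔽₄` the shape of `n` gives
`(X + c)^n = (X + c)(X^{4^a} + c)^3(X^{4^e} + c)(X^{4^{e+a}} + c)^2`. Expanding by Vieta and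
summing over `c`, only the power sums `∑ c^j` with `j ∈ {3, 6}` survive, so the sum is `e₁ + e₄`
of these seven roots. In terms of the `S_m` this is `G(X^4 - X)` with
`G = X + S_a + S_e + S_{e+a}^2(S_a^2 + S_a S_e) + S_e S_a^3`, hence `g = G`. Modulo
`X^{4^e} - X`, `S_{e+a} ≡ S_e + S_a` and `S_a^4 - S_a = X^{4^a} - X` turn `G` into the stated form.

On `𝔽_{4^e}`, `T = S_e` is the trace to `𝔽₄`. For even `e` the reduced map `f` preserves `T`, so
`f x = f x'` with `t = T x` gives `d^{4^a} + t^2 S_a(d)^2 + t^3 S_a(d) = 0` for `d = x - x'`. If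
`t ≠ 0` then `t^3 = 1` and `y = t^2 d` satisfies `∑_{j ≤ 2a} y^{2^j} = 0`, so `y` is fixed by
`z ↦ z^{2^{2a+1}}` and by `z ↦ z^{2^{2e}}`, hence by `z ↦ z^2` as `gcd(2a+1, 2e) = 1`. Thus
`y ∈ {0, 1}`, and `y = 1` is impossible since then the sum is `2a + 1 = 1`.
-/

open Polynomial Finset

lemma pow_pow_eq_self_of_pow_eq_self {M : Type*} [Monoid M] {q : ℕ} {c : M} (hc : c ^ q = c)
    (i : ℕ) : c ^ q ^ i = c := by
  induction i with
  | zero => simp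
  | succ i ih => rw [pow_succ, pow_mul, ih, hc]

lemma pow_pow_gcd_eq_self {M : Type*} [Monoid M] {p m n : ℕ} {y : M} (hm : y ^ p ^ m = y)
    (hn : y ^ p ^ n = y) : y ^ p ^ m.gcd n = y := by
  have periodic_iff (l : ℕ) : Function.IsPeriodicPt (· ^ p) l y ↔ y ^ p ^ l = y := by
    rw [Function.IsPeriodicPt, Function.IsFixedPt, pow_iterate]
  exact (periodic_iff _).1 (((periodic_iff m).2 hm).gcd ((periodic_iff n).2 hn))

lemma Polynomial.eq_of_comp_eq_comp {R : Type*} [CommRing R] [NoZeroDivisors R]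
    {f g r : R[X]} (hr : 0 < r.natDegree) (h : f.comp r = g.comp r) : f = g := by
  rw [← sub_eq_zero, ← sub_comp] at h
  rcases comp_eq_zero_iff.mp h with h | ⟨-, hr'⟩
  · exact sub_eq_zero.mp h
  · rw [hr', natDegree_C] at hr
    exact absurd hr (lt_irrefl 0)

section PartialTrace

variable {R S : Type*} [CommRing R] [CommRing S]

def partialTrace (q m : ℕ) (x : R) : R := ∑ i ∈ range m, x ^ q ^ i

lemma partialTrace_succ (q m : ℕ) (x : R) :
    partialTrace q (m + 1) x = partialTrace q m x + x ^ q ^ m :=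
  sum_range_succ _ _

lemma partialTrace_add_length (q m l : ℕ) (x : R) :
    partialTrace q (m + l) x = partialTrace q m x + partialTrace q l (x ^ q ^ m) := by
  simp only [partialTrace, sum_range_add, ← pow_mul, ← pow_add]

lemma map_partialTrace (f : R →+* S) (q m : ℕ) (x : R) :
    f (partialTrace q m x) = partialTrace q m (f x) := by
  simp [partialTrace]

lemma partialTrace_pow_sub_partialTrace (q m : ℕ) (x : R) :
    partialTrace q m (x ^ q) - partialTrace q m x = x ^ q ^ m - x := by
  simpa [partialTrace, ← pow_mul, ← pow_succ'] using sum_range_sub (fun i => x ^ q ^ i) m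

lemma dvd_partialTrace {q : ℕ} (hq : q ≠ 0) (m : ℕ) (x : R) : x ∣ partialTrace q m x :=
  dvd_sum fun i _ => dvd_pow_self x (pow_ne_zero i hq)

lemma partialTrace_of_pow_eq_self {q : ℕ} {c : R} (hc : c ^ q = c) (m : ℕ) :
    partialTrace q m c = m • c := by
  simp [partialTrace, pow_pow_eq_self_of_pow_eq_self hc]

lemma partialTrace_mul_of_pow_eq_self {q : ℕ} {c : R} (hc : c ^ q = c) (m : ℕ) (x : R) :
    partialTrace q m (c * x) = c * partialTrace q m x := by
  simp [partialTrace, mul_sum, mul_pow, pow_pow_eq_self_of_pow_eq_self hc]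

variable {p k q : ℕ} [ExpChar R p]

lemma add_pow_pow_of_eq_expChar_pow (hq : q = p ^ k) (i : ℕ) (x y : R) :
    (x + y) ^ q ^ i = x ^ q ^ i + y ^ q ^ i := by
  rw [hq, ← pow_mul, add_pow_expChar_pow]

lemma sub_pow_pow_of_eq_expChar_pow (hq : q = p ^ k) (i : ℕ) (x y : R) :
    (x - y) ^ q ^ i = x ^ q ^ i - y ^ q ^ i := by
  rw [hq, ← pow_mul, sub_pow_expChar_pow]

lemma partialTrace_add (hq : q = p ^ k) (m : ℕ) (x y : R) :
    partialTrace q m (x + y) = partialTrace q m x + partialTrace q m y := by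
  simp only [partialTrace, ← sum_add_distrib, add_pow_pow_of_eq_expChar_pow hq]

lemma partialTrace_sub (hq : q = p ^ k) (m : ℕ) (x y : R) :
    partialTrace q m (x - y) = partialTrace q m x - partialTrace q m y := by
  simp only [partialTrace, ← sum_sub_distrib, sub_pow_pow_of_eq_expChar_pow hq]

variable (p) in
lemma partialTrace_pow_expChar_pow (q m j : ℕ) (x : R) :
    partialTrace q m x ^ p ^ j = partialTrace q m (x ^ p ^ j) := by
  simp only [partialTrace, sum_pow_char_pow, ← pow_mul, mul_comm]

lemma partialTrace_pow_sub_self (hq : q = p ^ k) (m : ℕ) (x : R) :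
    partialTrace q m x ^ q - partialTrace q m x = x ^ q ^ m - x := by
  rw [hq, partialTrace_pow_expChar_pow, partialTrace_pow_sub_partialTrace]

lemma partialTrace_pow_sub (hq : q = p ^ k) (m : ℕ) (x : R) :
    partialTrace q m (x ^ q - x) = x ^ q ^ m - x := by
  rw [partialTrace_sub hq, partialTrace_pow_sub_partialTrace]

end PartialTrace

section FiniteField

variable {E : Type*} [Field E] [Fintype E] {p k q e : ℕ}

lemma partialTrace_pow_of_card (hE : Fintype.card E = q ^ e) (x : E) :
    partialTrace q e (x ^ q) = partialTrace q e x := by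
  have h := partialTrace_pow_sub_partialTrace q e x
  rwa [← hE, FiniteField.pow_card, sub_self, sub_eq_zero] at h

lemma partialTrace_pow_pow_of_card (hE : Fintype.card E = q ^ e) (i : ℕ) (x : E) :
    partialTrace q e (x ^ q ^ i) = partialTrace q e x := by
  induction i with
  | zero => simp
  | succ i ih => rw [pow_succ, pow_mul, partialTrace_pow_of_card hE, ih]

variable [ExpChar E p]

lemma partialTrace_partialTrace_of_card (hq : q = p ^ k) (hE : Fintype.card E = q ^ e)
    (m : ℕ) (x : E) : partialTrace q e (partialTrace q m x) = m • partialTrace q e x := by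
  induction m with
  | zero => simp [partialTrace, hq, (expChar_pos E p).ne']
  | succ m ih =>
    rw [partialTrace_succ, partialTrace_add hq, ih, partialTrace_pow_pow_of_card hE, succ_nsmul]

lemma partialTrace_pow_eq_self_of_card (hq : q = p ^ k) (hE : Fintype.card E = q ^ e) (x : E) :
    partialTrace q e x ^ q = partialTrace q e x := by
  rw [hq, partialTrace_pow_expChar_pow, ← hq, partialTrace_pow_of_card hE]

end FiniteField

section PowerSums

variable {K A : Type*} [Field K] [Fintype K] [CommRing A] [Algebra K A]

lemma FiniteField.sum_pow (i : ℕ) :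
    ∑ x : K, x ^ i = if i ≠ 0 ∧ Fintype.card K - 1 ∣ i then -1 else 0 := by
  classical
  rcases eq_or_ne i 0 with rfl | hi
  · simp
  rw [if_congr (and_iff_right hi) rfl rfl, ← FiniteField.sum_pow_units,
    ← Fintype.sum_equiv unitsEquivNeZero.symm (fun x => (x : K) ^ i) _ fun _ => rfl,
    ← Fintype.sum_subtype_add_sum_subtype (· ≠ (0 : K)), add_eq_left]
  exact sum_eq_zero fun x _ => by rw [not_ne_iff.mp x.2, zero_pow hi]

lemma sum_prod_algebraMap_add (s : Multiset A) :
    ∑ c : K, (s.map (algebraMap K A c + ·)).prod =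
      ∑ j ∈ range (Multiset.card s + 1),
        s.esymm j * algebraMap K A (∑ c : K, c ^ (Multiset.card s - j)) := by
  have vieta (c : K) :=
    congrArg (eval (algebraMap K A c)) (Multiset.prod_X_add_C_eq_sum_esymm s)
  simp only [eval_multiset_prod, Multiset.map_map, Function.comp_def, eval_add, eval_X, eval_C,
    eval_finsetSum, eval_mul, eval_pow] at vieta
  simp only [vieta, map_sum, map_pow, mul_sum]
  exact sum_comm

lemma sum_prod_algebraMap_add_of_card_eq_four (hK : Fintype.card K = 4) (s : Multiset A)
    (hs : Multiset.card s = 7) :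
    ∑ c : K, (s.map (algebraMap K A c + ·)).prod = -(s.esymm 1 + s.esymm 4) := by
  simp only [sum_prod_algebraMap_add, hs, sum_range_succ, sum_range_zero, FiniteField.sum_pow, hK]
  norm_num
  ring

end PowerSums

section ClosedForm

variable {R S : Type*} [CommRing R] [CommRing S]

/-- `gClosed a e X` is `g_{n,4}` itself and `gReduced a e X` its reduction mod `X^{4^e} - X`. -/
def gClosed (a e : ℕ) (x : R) : R :=
  x + partialTrace 4 a x + partialTrace 4 e x +
    partialTrace 4 (e + a) x ^ 2 *
      (partialTrace 4 a x ^ 2 + partialTrace 4 a x * partialTrace 4 e x) +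
    partialTrace 4 e x * partialTrace 4 a x ^ 3

def gReduced (a e : ℕ) (x : R) : R :=
  x ^ 4 ^ a + partialTrace 4 e x + partialTrace 4 a x ^ 2 * partialTrace 4 e x ^ 2 +
    partialTrace 4 a x * partialTrace 4 e x ^ 3

lemma map_gClosed (f : R →+* S) (a e : ℕ) (x : R) : f (gClosed a e x) = gClosed a e (f x) := by
  simp [gClosed, map_partialTrace]

lemma map_gReduced (f : R →+* S) (a e : ℕ) (x : R) :
    f (gReduced a e x) = gReduced a e (f x) := by
  simp [gReduced, map_partialTrace]

variable [CharP R 2]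

theorem sum_add_algebraMap_pow_eq_gClosed {K : Type*} [Field K] [Fintype K] [Algebra K R]
    (hK : Fintype.card K = 4) (a e : ℕ) (u : R) :
    ∑ c : K, (u + algebraMap K R c) ^ (1 + 3 * 4 ^ a + 4 ^ e + 2 * 4 ^ (e + a)) =
      gClosed a e (u ^ 4 - u) := by
  have hc (c : K) : algebraMap K R c ^ 4 = algebraMap K R c := by
    rw [← map_pow, ← hK, FiniteField.pow_card]
  have hfrob (c : K) (i : ℕ) :
      (u + algebraMap K R c) ^ 4 ^ i = u ^ 4 ^ i + algebraMap K R c := by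
    rw [add_pow_pow_of_eq_expChar_pow (show 4 = 2 ^ 2 by rfl),
      pow_pow_eq_self_of_pow_eq_self (hc c)]
  have hprod (c : K) : (u + algebraMap K R c) ^ (1 + 3 * 4 ^ a + 4 ^ e + 2 * 4 ^ (e + a)) =
      (({u, u ^ 4 ^ a, u ^ 4 ^ a, u ^ 4 ^ a, u ^ 4 ^ e, u ^ 4 ^ (e + a), u ^ 4 ^ (e + a)} :
        Multiset R).map (algebraMap K R c + ·)).prod := by
    rw [pow_add, pow_add, pow_add, pow_one, pow_mul', pow_mul', hfrob, hfrob, hfrob]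
    simp only [Multiset.insert_eq_cons, Multiset.map_cons, Multiset.prod_cons,
      Multiset.map_singleton, Multiset.prod_singleton]
    ring
  rw [sum_congr rfl fun c _ => hprod c, sum_prod_algebraMap_add_of_card_eq_four hK _ (by simp)]
  simp only [gClosed, partialTrace_pow_sub (show 4 = 2 ^ 2 by rfl)]
  generalize u ^ 4 ^ a = v
  generalize u ^ 4 ^ e = w
  generalize u ^ 4 ^ (e + a) = z
  simp [Multiset.esymm, Multiset.powersetCard_cons, Multiset.powersetCard_one]
  ring_nf
  reduce_mod_char!

theorem dvd_gClosed_sub_gReduced (a e : ℕ) (x : R) :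
    x ^ 4 ^ e - x ∣ gClosed a e x - gReduced a e x := by
  have hr : partialTrace 4 (e + a) x =
      partialTrace 4 e x + partialTrace 4 a x + partialTrace 4 a (x ^ 4 ^ e - x) := by
    rw [partialTrace_add_length, partialTrace_sub (show 4 = 2 ^ 2 by rfl)]
    ring
  have hs : x ^ 4 ^ a = partialTrace 4 a x ^ 4 - partialTrace 4 a x + x := by
    rw [partialTrace_pow_sub_self (show 4 = 2 ^ 2 by rfl)]
    ring
  have key : gClosed a e x - gReduced a e x = partialTrace 4 a (x ^ 4 ^ e - x) *
      (partialTrace 4 a (x ^ 4 ^ e - x) *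
        (partialTrace 4 a x ^ 2 + partialTrace 4 a x * partialTrace 4 e x)) := by
    rw [gClosed, gReduced, hr, hs]
    generalize partialTrace 4 a x = s
    generalize partialTrace 4 e x = t
    generalize partialTrace 4 a (x ^ 4 ^ e - x) = D
    ring_nf
    reduce_mod_char!
  rw [key]
  exact (dvd_partialTrace four_ne_zero a _).mul_right _

lemma gReduced_sub_gReduced (a e : ℕ) {x y : R} (h : partialTrace 4 e x = partialTrace 4 e y) :
    gReduced a e x - gReduced a e y = (x - y) ^ 4 ^ a +
      partialTrace 4 e x ^ 2 * partialTrace 4 a (x - y) ^ 2 +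
      partialTrace 4 e x ^ 3 * partialTrace 4 a (x - y) := by
  rw [gReduced, gReduced, ← h, sub_pow_pow_of_eq_expChar_pow (show 4 = 2 ^ 2 by rfl),
    partialTrace_sub (show 4 = 2 ^ 2 by rfl)]
  generalize partialTrace 4 e x = t
  generalize partialTrace 4 a x = s
  generalize partialTrace 4 a y = s'
  ring_nf
  reduce_mod_char!

lemma partialTrace_two_mul_of_pow_three_eq_one {t : R} (ht : t ^ 3 = 1) (m : ℕ) (d : R) :
    partialTrace 2 (2 * m) (t ^ 2 * d) =
      t * partialTrace 4 m d ^ 2 + t ^ 2 * partialTrace 4 m d := by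
  induction m with
  | zero => simp [partialTrace]
  | succ m ih =>
    have h4 : (t ^ 2) ^ 4 = t ^ 2 := by linear_combination (t ^ 5 + t ^ 2) * ht
    have heven : (t ^ 2 * d) ^ 2 ^ (2 * m) = t ^ 2 * d ^ 4 ^ m := by
      rw [pow_mul, mul_pow, show 2 ^ 2 = 4 by rfl, pow_pow_eq_self_of_pow_eq_self h4]
    have hodd : (t ^ 2 * d) ^ 2 ^ (2 * m + 1) = t * (d ^ 4 ^ m) ^ 2 := by
      rw [pow_succ 2 (2 * m), pow_mul, heven]
      linear_combination (d ^ 4 ^ m) ^ 2 * t * ht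
    rw [show 2 * (m + 1) = 2 * m + 1 + 1 by ring, partialTrace_succ, partialTrace_succ, ih,
      heven, hodd, partialTrace_succ]
    linear_combination
      (-(t * partialTrace 4 m d * d ^ 4 ^ m)) * (CharTwo.two_eq_zero : (2 : R) = 0)

end ClosedForm

section Permutation

variable {E : Type*} [Field E] [Fintype E] [CharP E 2] {a e : ℕ}

lemma partialTrace_gReduced (hE : Fintype.card E = 4 ^ e) (he : Even e) (x : E) :
    partialTrace 4 e (gReduced a e x) = partialTrace 4 e x := by
  have hq : 4 = 2 ^ 2 := rfl
  have ht := partialTrace_pow_eq_self_of_card hq hE x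
  have hsq (z : E) : partialTrace 4 e (z ^ 2) = partialTrace 4 e z ^ 2 :=
    (partialTrace_pow_expChar_pow 2 4 e 1 z).symm
  have htj (j : ℕ) : (partialTrace 4 e x ^ j) ^ 4 = partialTrace 4 e x ^ j := by
    rw [← pow_mul, mul_comm, pow_mul, ht]
  rw [gReduced, partialTrace_add hq, partialTrace_add hq, partialTrace_add hq,
    partialTrace_pow_pow_of_card hE, partialTrace_of_pow_eq_self ht,
    mul_comm (partialTrace 4 a x ^ 2), mul_comm (partialTrace 4 a x),
    partialTrace_mul_of_pow_eq_self (htj 2), partialTrace_mul_of_pow_eq_self (htj 3), hsq,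
    partialTrace_partialTrace_of_card hq hE]
  have he' : (e : E) = 0 := (CharP.cast_eq_zero_iff E 2 e).mpr (even_iff_two_dvd.mp he)
  have ha : ((a * (a + 1) : ℕ) : E) = 0 :=
    (CharP.cast_eq_zero_iff E 2 _).mpr (even_iff_two_dvd.mp (Nat.even_mul_succ_self a))
  simp only [nsmul_eq_mul, he']
  push_cast at ha
  linear_combination partialTrace 4 e x ^ 4 * ha

lemma eq_zero_of_pow_add_partialTrace_eq_zero (hE : Fintype.card E = 4 ^ e)
    (hcop : Nat.Coprime e (2 * a + 1)) {t d : E} (ht : t ^ 3 = 1)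
    (h : d ^ 4 ^ a + t ^ 2 * partialTrace 4 a d ^ 2 + t ^ 3 * partialTrace 4 a d = 0) :
    d = 0 := by
  set y := t ^ 2 * d
  have h4 : (t ^ 2) ^ 4 = t ^ 2 := by linear_combination (t ^ 5 + t ^ 2) * ht
  have hsum : partialTrace 2 (2 * a + 1) y = 0 := by
    rw [partialTrace_succ, partialTrace_two_mul_of_pow_three_eq_one ht, pow_mul, mul_pow,
      show 2 ^ 2 = 4 by rfl, pow_pow_eq_self_of_pow_eq_self h4]
    linear_combination t ^ 2 * h - (t * partialTrace 4 a d ^ 2 + t ^ 2 * partialTrace 4 a d) * ht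
  have hodd : y ^ 2 ^ (2 * a + 1) = y := by
    have h2 := partialTrace_pow_sub_self (show 2 = 2 ^ 1 by rfl) (2 * a + 1) y
    rwa [hsum, zero_pow two_ne_zero, sub_zero, eq_comm, sub_eq_zero] at h2
  have heven : y ^ 2 ^ (2 * e) = y := by
    rw [pow_mul, show 2 ^ 2 = 4 by rfl, ← hE, FiniteField.pow_card]
  have hcop' : Nat.Coprime (2 * a + 1) (2 * e) :=
    (Nat.coprime_two_right.mpr (odd_two_mul_add_one a)).mul_right hcop.symm
  have hy : y ^ 2 = y := by simpa [hcop'.gcd_eq_one] using pow_pow_gcd_eq_self hodd heven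
  rcases mul_eq_zero.mp (show y * (y - 1) = 0 by linear_combination hy) with hy0 | hy1
  · exact (mul_eq_zero.mp hy0).resolve_left (pow_ne_zero 2 (by rintro rfl; simp at ht))
  · rw [sub_eq_zero.mp hy1, partialTrace_of_pow_eq_self (one_pow 2), nsmul_eq_mul,
      mul_one] at hsum
    have h2a : ((2 * a : ℕ) : E) = 0 := (CharP.cast_eq_zero_iff E 2 _).mpr (dvd_mul_right 2 a)
    push_cast at hsum h2a
    exact absurd (by linear_combination hsum - h2a) one_ne_zero

theorem gReduced_injective (hE : Fintype.card E = 4 ^ e) (he : Even e)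
    (hcop : Nat.Coprime e (2 * a + 1)) : Function.Injective (gReduced a e : E → E) := by
  intro x y hxy
  have htr : partialTrace 4 e x = partialTrace 4 e y := by
    rw [← partialTrace_gReduced (a := a) hE he x, hxy, partialTrace_gReduced hE he]
  have hd := gReduced_sub_gReduced a e htr
  rw [hxy, sub_self, eq_comm] at hd
  have ht4 := partialTrace_pow_eq_self_of_card (show 4 = 2 ^ 2 by rfl) hE x
  rw [← sub_eq_zero]
  rcases eq_or_ne (partialTrace 4 e x) 0 with h0 | h0
  · simpa [h0] using hd
  · have ht3 : partialTrace 4 e x ^ 3 = 1 := mul_left_cancel₀ h0 (by linear_combination ht4)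
    exact eq_zero_of_pow_add_partialTrace_eq_zero hE hcop ht3 hd

end Permutation

theorem stmt14_general (e a : ℕ)
    (E : Type*) [Field E] [Fintype E] (hE : Fintype.card E = 4 ^ e)
    (F4 : Subfield E) [Fintype F4] (hF4 : Fintype.card F4 = 4)
    (n : ℕ) (hn : n = 1 + 3 * 4 ^ a + 4 ^ e + 2 * 4 ^ (e + a))
    (g : Polynomial E)
    (hg : ∑ c : F4, (X + C (c : E)) ^ n = g.comp (X ^ 4 - X))
    (S : ℕ → Polynomial E) (hS : ∀ d, S d = ∑ i ∈ Finset.range d, X ^ 4 ^ i) :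
    (X ^ 4 ^ e - X) ∣ g - (X ^ 4 ^ a + S e + S a ^ 2 * S e ^ 2 + S a * S e ^ 3) ∧
    (2 ∣ e → Nat.gcd e (2 * a + 1) = 1 → Function.Bijective fun x : E => g.eval x) := by
  have : CharP E 2 := charP_of_card_eq_prime_pow (f := 2 * e) (by rw [hE, pow_mul]; rfl)
  obtain rfl : S = fun d => partialTrace 4 d X := funext hS
  have hg' : g = gClosed a e X := by
    refine eq_of_comp_eq_comp (r := X ^ 4 - X)
      (by rw [natDegree_sub_eq_left_of_natDegree_lt] <;> simp) ?_
    rw [← hg, hn, ← coe_compRingHom_apply, map_gClosed, coe_compRingHom_apply, X_comp]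
    exact sum_add_algebraMap_pow_eq_gClosed hF4 a e X
  have hdvd : X ^ 4 ^ e - X ∣ g - gReduced a e X := hg' ▸ dvd_gClosed_sub_gReduced a e X
  refine ⟨hdvd, fun h2e hcop => ?_⟩
  have heval : (fun x => g.eval x) = gReduced a e := by
    obtain ⟨k, hk⟩ := hdvd
    funext x
    have hx := congrArg (eval x) hk
    rw [eval_sub, ← coe_evalRingHom, map_gReduced] at hx
    simp only [coe_evalRingHom, eval_mul, eval_sub, eval_pow, eval_X, ← hE, FiniteField.pow_card,
      sub_self, zero_mul] at hx
    exact sub_eq_zero.mp hx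
  rw [heval]
  exact Finite.injective_iff_bijective.mp (gReduced_injective hE (even_iff_two_dvd.mpr h2e) hcop)

/-- Proposition 3.4: for `q = 4` and `n = 1 + 3q^a + q^e + 2q^{e+a}` (with `e, a` positive),
`g_{n,q} ≡ X^{q^a} + S_e + S_a²S_e² + S_aS_e³ (mod X^{q^e} − X)`; moreover if `2 ∣ e` and
`gcd(e, 2a+1) = 1`, then `g_{n,q}` permutes `F_{q^e}`. -/
theorem stmt14 (e a : ℕ) (he : 0 < e) (ha : 0 < a)
    (E : Type*) [Field E] [Fintype E] (hE : Fintype.card E = 4 ^ e)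
    (F4 : Subfield E) [Fintype F4] (hF4 : Fintype.card F4 = 4)
    (n : ℕ) (hn : n = 1 + 3 * 4 ^ a + 4 ^ e + 2 * 4 ^ (e + a))
    (g : Polynomial E)
    (hg : ∑ c : F4, (X + C (c : E)) ^ n = g.comp (X ^ 4 - X))
    (S : ℕ → Polynomial E) (hS : ∀ d, S d = ∑ i ∈ Finset.range d, X ^ 4 ^ i) :
    (X ^ 4 ^ e - X) ∣ g - (X ^ 4 ^ a + S e + S a ^ 2 * S e ^ 2 + S a * S e ^ 3) ∧
    (2 ∣ e → Nat.gcd e (2 * a + 1) = 1 → Function.Bijective fun x : E => g.eval x) :=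
  stmt14_general e a E hE F4 hF4 n hn g hg S hS
end

section
/- Let q = 4 and n = 1 + 2q + q³ + q^e + 2q^{e+1} with e a positive integer. Then g_{n,q} ≡ X^{q²} + S_e + X²S_e² + S_3S_e³ (mod X^{q^e} − X). If 2 | e but 3 ∤ e, then g_{n,q} is a permutation polynomial of F_{q^e}. -/
open Polynomial Finset

/-!
Write `T = S_e`, the trace of `𝔽_{4^e}` over `𝔽₄`. Substituting `X ↦ X^4 - X` turns `S_d` into
`X^{4^d} - X`. Expanding `(X + c)^n` as a product of Frobenius twists and summing over `c ∈ 𝔽₄`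
(only the coefficients of `c^3` and `c^6` survive) makes the congruence an explicit polynomial
identity in `X` and `Y = X^{4^e}` modulo `Y^4 - Y - (X^4 - X)`.

On `𝔽_{4^e}` the polynomial is `x ↦ L_{T x}(x) + T x`, where
`L_τ(z) = z^16 + τ^2 z^2 + τ^3 S_3(z)` is additive in `z`. For even `e` the trace of the value is
`T x`, so two points with the same value have the same trace `τ`, and their difference `z`
satisfies `L_τ(z) = 0`. For `τ ≠ 0` this forces `w = τ^2 z` to be `0` or a root of
`w^3 + w + 1`, which lies in `𝔽₈` and hence not in `𝔽_{4^e}` when `3 ∤ e`.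
-/

theorem sum_pow_eq_ite {K : Type*} [Field K] [Fintype K] (k : ℕ) :
    ∑ c : K, c ^ k = if k ≠ 0 ∧ Fintype.card K - 1 ∣ k then -1 else 0 := by
  classical
  rcases eq_or_ne k 0 with rfl | hk
  · simp
  have hunits : univ.map ⟨((↑) : Kˣ → K), Units.val_injective⟩ = univ \ {0} := by
    ext x
    simpa using ⟨fun ⟨u, hu⟩ => hu ▸ u.ne_zero, fun h => ⟨Units.mk0 x h, rfl⟩⟩
  calc ∑ c : K, c ^ k = ∑ c ∈ univ \ {(0 : K)}, c ^ k := by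
        rw [← sum_sdiff (subset_univ {0}), sum_singleton, zero_pow hk, add_zero]
    _ = ∑ u : Kˣ, (u : K) ^ k := by rw [← hunits, sum_map]; rfl
    _ = _ := by rw [FiniteField.sum_pow_units]; simp [hk]

theorem sum_algebraMap_septic_of_card_eq_four {K A : Type*} [Field K] [Fintype K] [CommRing A]
    [Algebra K A] (hK : Fintype.card K = 4) (a₀ a₁ a₂ a₃ a₄ a₅ a₆ a₇ : A) :
    ∑ c : K, (a₀ + a₁ * algebraMap K A c + a₂ * algebraMap K A c ^ 2
      + a₃ * algebraMap K A c ^ 3 + a₄ * algebraMap K A c ^ 4 + a₅ * algebraMap K A c ^ 5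
      + a₆ * algebraMap K A c ^ 6 + a₇ * algebraMap K A c ^ 7) = -(a₃ + a₆) := by
  have hsum : ∀ k, ∑ c : K, algebraMap K A c ^ k
      = algebraMap K A (if k ≠ 0 ∧ 3 ∣ k then -1 else 0) := fun k => by
    simp only [← map_pow, ← map_sum, sum_pow_eq_ite, hK]
  have hcard : (Fintype.card K : A) = 0 := by
    rw [← map_natCast (algebraMap K A), FiniteField.cast_card_eq_zero, map_zero]
  have h1 : ∑ c : K, algebraMap K A c = 0 := by simpa using hsum 1
  simp [sum_add_distrib, ← mul_sum, hsum, hcard, h1]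
  ring

theorem not_seven_dvd_four_pow_sub_one {e : ℕ} (he : ¬ 3 ∣ e) : ¬ 7 ∣ 4 ^ e - 1 := by
  have hmod : 4 ^ e % 7 = 4 ^ (e % 3) % 7 := by
    conv_lhs => rw [← Nat.div_add_mod e 3, pow_add, pow_mul, Nat.mul_mod, Nat.pow_mod]
    norm_num
  have hpos : 1 ≤ 4 ^ e := Nat.one_le_pow _ _ (by norm_num)
  have : e % 3 = 1 ∨ e % 3 = 2 := by omega
  rcases this with h | h <;> rw [h] at hmod <;> norm_num at hmod <;> omega

theorem cubic_ne_zero {K : Type*} [Field K] [Fintype K] [CharP K 2]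
    (h7 : ¬ 7 ∣ Fintype.card K - 1) (w : K) : w ^ 3 + w + 1 ≠ 0 := by
  intro hw
  have hw0 : w ≠ 0 := by rintro rfl; simp at hw
  have h7w : w ^ 7 = 1 := by
    linear_combination (w ^ 4 + w ^ 2 + w + 1) * hw
      - (w ^ 5 + w ^ 4 + w ^ 3 + w ^ 2 + w + 1) * (CharTwo.two_eq_zero : (2 : K) = 0)
  have hqw : w ^ (Fintype.card K - 1) = 1 := FiniteField.pow_card_sub_one_eq_one w hw0
  have hgcd : Nat.gcd 7 (Fintype.card K - 1) = 1 :=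
    (Nat.Prime.coprime_iff_not_dvd (by norm_num)).mpr h7
  have h1 : w = 1 := by simpa [hgcd] using pow_gcd_eq_one.mpr ⟨h7w, hqw⟩
  subst h1
  exact one_ne_zero (by linear_combination hw - (CharTwo.two_eq_zero : (2 : K) = 0))

theorem eval_eq_of_X_pow_card_sub_X_dvd {K : Type*} [Field K] [Fintype K] {p q : K[X]}
    (h : X ^ Fintype.card K - X ∣ p - q) (x : K) : p.eval x = q.eval x := by
  obtain ⟨r, hr⟩ := h
  have := congrArg (eval x) hr
  rwa [eval_sub, eval_mul, eval_sub, eval_pow, eval_X, FiniteField.pow_card, sub_self, zero_mul,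
    sub_eq_zero] at this

theorem dvd_of_comp_dvd_comp {F : Type*} [Field F] {p q r : F[X]} (hr : 0 < r.natDegree)
    (h : p.comp r ∣ q.comp r) : p ∣ q := by
  have comp_ne_zero : ∀ {s : F[X]}, s ≠ 0 → s.comp r ≠ 0 := fun hs h0 => by
    rcases comp_eq_zero_iff.mp h0 with h | ⟨-, h⟩
    · exact hs h
    · rw [h, natDegree_C] at hr; exact hr.false
  rcases eq_or_ne p 0 with rfl | hp
  · rw [zero_comp, zero_dvd_iff] at h
    rw [zero_dvd_iff]
    by_contra hq
    exact comp_ne_zero hq h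
  rw [← EuclideanDomain.mod_eq_zero]
  by_contra hmod
  have hdvd : p.comp r ∣ (q % p).comp r := by
    have hq : (q % p).comp r = q.comp r - p.comp r * (q / p).comp r := by
      rw [← mul_comp, ← sub_comp, EuclideanDomain.mod_eq_sub_mul_div]
    rw [hq]
    exact dvd_sub h (dvd_mul_right _ _)
  have hle := natDegree_le_of_dvd hdvd (comp_ne_zero hmod)
  rw [natDegree_comp, natDegree_comp] at hle
  have hlt := natDegree_lt_natDegree hmod (degree_mod_lt q hp)
  exact absurd (Nat.le_of_mul_le_mul_right hle hr) (not_le.mpr hlt)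

theorem pow_four_pow_of_pow_four_eq {M : Type*} [Monoid M] {a : M} (ha : a ^ 4 = a) (m : ℕ) :
    a ^ 4 ^ m = a := by
  induction m with
  | zero => simp
  | succ m ih => rw [pow_succ, pow_mul, ih, ha]

-- `traceSum d = S_d`; on `𝔽_{4^e}`, `traceSum e` is the trace to `𝔽₄`.
def traceSum {R : Type*} [Semiring R] (d : ℕ) (x : R) : R := ∑ i ∈ range d, x ^ 4 ^ i

section

variable {R : Type*} [CommSemiring R]

theorem traceSum_X_comp (d : ℕ) (p : R[X]) :
    (traceSum d (X : R[X])).comp p = traceSum d p := by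
  simp [traceSum]

theorem eval_traceSum_X (d : ℕ) (x : R) :
    (traceSum d (X : R[X])).eval x = traceSum d x := by
  simp [traceSum, eval_finsetSum]

theorem traceSum_mul_of_pow_four_eq {α : R} (hα : α ^ 4 = α) (d : ℕ) (a : R) :
    traceSum d (α * a) = α * traceSum d a := by
  simp only [traceSum, mul_sum, mul_pow, pow_four_pow_of_pow_four_eq hα]

theorem traceSum_of_pow_four_eq {α : R} (hα : α ^ 4 = α) (d : ℕ) :
    traceSum d α = d * α := by
  simp [traceSum, pow_four_pow_of_pow_four_eq hα]

theorem traceSum_three (x : R) : traceSum 3 x = x + x ^ 4 + x ^ 4 ^ 2 := by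
  simp [traceSum, sum_range_succ]

end

theorem traceSum_pow_four {R : Type*} [CommRing R] {d : ℕ} {a : R} (ha : a ^ 4 ^ d = a) :
    traceSum d (a ^ 4) = traceSum d a := by
  have hshift := sum_range_succ' (fun i => a ^ 4 ^ i) d
  rw [sum_range_succ, ha, pow_zero, pow_one, add_left_inj] at hshift
  simp only [traceSum, ← pow_mul, ← pow_succ', hshift]

section CharTwo

variable {R : Type*} [CommRing R] [CharP R 2]

theorem add_pow_four_pow (a b : R) (m : ℕ) : (a + b) ^ 4 ^ m = a ^ 4 ^ m + b ^ 4 ^ m := by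
  rw [show 4 ^ m = 2 ^ (2 * m) by rw [pow_mul]; norm_num]
  exact add_pow_char_pow a b _ _

theorem sub_pow_four_pow (a b : R) (m : ℕ) : (a - b) ^ 4 ^ m = a ^ 4 ^ m - b ^ 4 ^ m := by
  rw [show 4 ^ m = 2 ^ (2 * m) by rw [pow_mul]; norm_num]
  exact sub_pow_char_pow a b _

theorem traceSum_add (d : ℕ) (a b : R) : traceSum d (a + b) = traceSum d a + traceSum d b := by
  simp only [traceSum, add_pow_four_pow, sum_add_distrib]

theorem traceSum_sq (d : ℕ) (a : R) : traceSum d a ^ 2 = traceSum d (a ^ 2) := by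
  simp only [traceSum, sum_pow_char, ← pow_mul, mul_comm]

theorem traceSum_pow_four_eq_self {d : ℕ} {a : R} (ha : a ^ 4 ^ d = a) :
    traceSum d a ^ 4 = traceSum d a := by
  rw [show traceSum d a ^ 4 = (traceSum d a ^ 2) ^ 2 by ring, traceSum_sq, traceSum_sq, ← pow_mul,
    traceSum_pow_four ha]

theorem traceSum_pow_four_sub_self (x : R) (d : ℕ) : traceSum d (x ^ 4 - x) = x ^ 4 ^ d - x := by
  induction d with
  | zero => simp [traceSum]
  | succ d ih =>
    rw [traceSum, sum_range_succ, ← traceSum, ih, sub_pow_four_pow, ← pow_mul, ← pow_succ']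
    ring

theorem add_pow_four_pow_of_pow_four_eq (x : R) {u : R} (hu : u ^ 4 = u) (m : ℕ) :
    (x + u) ^ 4 ^ m = x ^ 4 ^ m + u := by
  rw [add_pow_four_pow, pow_four_pow_of_pow_four_eq hu]

theorem add_pow_eq_prod (x : R) {u : R} (hu : u ^ 4 = u) (e : ℕ) :
    (x + u) ^ (1 + 2 * 4 + 4 ^ 3 + 4 ^ e + 2 * 4 ^ (e + 1))
      = (x + u) * (x ^ 4 + u) ^ 2 * (x ^ 64 + u) * (x ^ 4 ^ e + u)
        * ((x ^ 4 ^ e) ^ 4 + u) ^ 2 := by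
  have frob := add_pow_four_pow_of_pow_four_eq x hu
  have frob₁ : (x + u) ^ 4 = x ^ 4 + u := by simpa using frob 1
  rw [pow_add, pow_add, pow_add, pow_add, pow_one, pow_mul', pow_mul', frob₁, frob 3, frob e,
    frob (e + 1), pow_succ 4 e, pow_mul]
  norm_num

theorem expand_prod_add (x y u : R) :
    (x + u) * (x ^ 4 + u) ^ 2 * (x ^ 64 + u) * (y + u) * (y ^ 4 + u) ^ 2 =
      x ^ 73 * y ^ 9
      + (x ^ 9 * y ^ 9 + x ^ 72 * y ^ 9 + x ^ 73 * y ^ 8) * u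
      + (x ^ 8 * y ^ 9 + x ^ 9 * y ^ 8 + x ^ 65 * y ^ 9 + x ^ 72 * y ^ 8 + x ^ 73 * y) * u ^ 2
      + (x * y ^ 9 + x ^ 8 * y ^ 8 + x ^ 9 * y + x ^ 64 * y ^ 9 + x ^ 65 * y ^ 8 + x ^ 72 * y
          + x ^ 73) * u ^ 3
      + (y ^ 9 + x * y ^ 8 + x ^ 8 * y + x ^ 9 + x ^ 64 * y ^ 8 + x ^ 65 * y + x ^ 72) * u ^ 4
      + (y ^ 8 + x * y + x ^ 8 + x ^ 64 * y + x ^ 65) * u ^ 5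
      + (y + x + x ^ 64) * u ^ 6
      + 1 * u ^ 7 := by
  ring_nf
  reduce_mod_char!

theorem sum_add_algebraMap_pow {K A : Type*} [Field K] [Fintype K] [CommRing A] [CharP A 2]
    [Algebra K A] (hK : Fintype.card K = 4) (e : ℕ) (x : A) :
    ∑ c : K, (x + algebraMap K A c) ^ (1 + 2 * 4 + 4 ^ 3 + 4 ^ e + 2 * 4 ^ (e + 1)) =
      (x * (x ^ 4 ^ e) ^ 9 + x ^ 8 * (x ^ 4 ^ e) ^ 8 + x ^ 9 * x ^ 4 ^ e
        + x ^ 64 * (x ^ 4 ^ e) ^ 9 + x ^ 65 * (x ^ 4 ^ e) ^ 8 + x ^ 72 * x ^ 4 ^ e + x ^ 73)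
        + (x ^ 4 ^ e + x + x ^ 64) := by
  have hu : ∀ c : K, algebraMap K A c ^ 4 = algebraMap K A c := fun c => by
    rw [← map_pow, ← hK, FiniteField.pow_card]
  simp only [add_pow_eq_prod x (hu _), expand_prod_add, sum_algebraMap_septic_of_card_eq_four hK,
    CharTwo.neg_eq]

-- The cofactor is the quotient of the division by `y^4 - y - (x^4 - x)` in `𝔽₂[x, y]`.
theorem sub_dvd_reduced_sum_sub (x y : R) :
    (y ^ 4 - y) - (x ^ 4 - x) ∣
      (x * y ^ 9 + x ^ 8 * y ^ 8 + x ^ 9 * y + x ^ 64 * y ^ 9 + x ^ 65 * y ^ 8 + x ^ 72 * y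
        + x ^ 73 + (y + x + x ^ 64))
      - ((x ^ 4 - x) ^ 16 + (y - x) + (x ^ 4 - x) ^ 2 * (y - x) ^ 2
        + (x ^ 64 - x) * (y - x) ^ 3) :=
  ⟨x * y ^ 2 + x * y ^ 5 + x ^ 2 * y + x ^ 5 * y + x ^ 8 * y + x ^ 8 * y ^ 4 + x ^ 9 + x ^ 12
    + x ^ 64 * y ^ 2 + x ^ 64 * y ^ 5 + x ^ 65 * y ^ 4 + x ^ 66 + x ^ 68 * y + x ^ 69, by
    ring_nf
    reduce_mod_char!⟩

def linearPart (τ z : R) : R := z ^ 4 ^ 2 + τ ^ 2 * z ^ 2 + τ ^ 3 * traceSum 3 z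

theorem linearPart_add (τ a b : R) :
    linearPart τ (a + b) = linearPart τ a + linearPart τ b := by
  simp only [linearPart, add_pow_four_pow, add_pow_char, traceSum_add]
  ring

theorem traceSum_linearPart_add_self {e : ℕ} (he : 2 ∣ e) (hfrob : ∀ y : R, y ^ 4 ^ e = y)
    (x : R) :
    traceSum e (linearPart (traceSum e x) x + traceSum e x) = traceSum e x := by
  set τ := traceSum e x
  have hτ : τ ^ 4 = τ := traceSum_pow_four_eq_self (hfrob x)
  have hpow : ∀ y : R, traceSum e (y ^ 4) = traceSum e y := fun y => traceSum_pow_four (hfrob y)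
  have h16 : traceSum e (x ^ 4 ^ 2) = τ := by rw [pow_succ, pow_mul, hpow, pow_one, hpow]
  have he0 : (e : R) = 0 := by
    obtain ⟨k, rfl⟩ := he
    simp [CharTwo.two_eq_zero]
  have hτ2 : (τ ^ 2) ^ 4 = τ ^ 2 := by rw [pow_right_comm, hτ]
  have hτ3 : (τ ^ 3) ^ 4 = τ ^ 3 := by rw [pow_right_comm, hτ]
  simp only [linearPart, traceSum_add, traceSum_of_pow_four_eq hτ, he0,
    traceSum_mul_of_pow_four_eq hτ2, traceSum_mul_of_pow_four_eq hτ3, ← traceSum_sq, traceSum_three,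
    h16, hpow]
  linear_combination (2 * τ ^ 4) * (CharTwo.two_eq_zero : (2 : R) = 0)

theorem eq_zero_of_linearPart_eq_zero [IsDomain R] (hcubic : ∀ w : R, w ^ 3 + w + 1 ≠ 0)
    {τ z : R} (hτ : τ ^ 4 = τ) (hz : linearPart τ z = 0) : z = 0 := by
  rw [linearPart, traceSum_three] at hz
  rcases eq_or_ne τ 0 with rfl | hτ0
  · simpa using hz
  have hτ3 : τ ^ 3 = 1 := mul_left_cancel₀ hτ0 (by linear_combination hτ)
  by_contra hz0
  apply hcubic (τ ^ 2 * z)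
  refine (mul_eq_zero.mp ?_).resolve_left (mul_ne_zero (pow_ne_zero 2 hτ0) hz0)
  linear_combination τ ^ 2 * hz + (z ^ 4 * τ ^ 5 - τ ^ 2 * z - τ ^ 2 * z ^ 16) * hτ3
    - τ ^ 2 * z ^ 16 * (CharTwo.two_eq_zero : (2 : R) = 0)

end CharTwo

theorem X_pow_four_pow_sub_X_dvd {E : Type*} [Field E] [CharP E 2] (F4 : Subfield E) [Fintype F4]
    (hF4 : Fintype.card F4 = 4) (e : ℕ) (g : E[X])
    (hg : ∑ c : F4, (X + C (c : E)) ^ (1 + 2 * 4 + 4 ^ 3 + 4 ^ e + 2 * 4 ^ (e + 1))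
      = g.comp (X ^ 4 - X)) :
    X ^ 4 ^ e - X ∣ g - (X ^ 4 ^ 2 + traceSum e X + X ^ 2 * traceSum e X ^ 2
      + traceSum 3 X * traceSum e X ^ 3) := by
  have hdeg : 0 < (X ^ 4 - X : E[X]).natDegree := by
    rw [natDegree_sub_eq_left_of_natDegree_lt] <;> simp
  refine dvd_of_comp_dvd_comp hdeg ?_
  have hM : (X ^ 4 ^ e - X : E[X]).comp (X ^ 4 - X)
      = ((X ^ 4 ^ e) ^ 4 - X ^ 4 ^ e) - (X ^ 4 - X) := by
    rw [sub_comp, pow_comp, X_comp, sub_pow_four_pow, pow_right_comm]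
  have hC : ∀ c : F4, C (c : E) = algebraMap F4 E[X] c := fun _ => rfl
  simp only [hM, sub_comp, ← hg, hC, sum_add_algebraMap_pow hF4, add_comp, mul_comp, pow_comp,
    X_comp, traceSum_X_comp, traceSum_pow_four_sub_self]
  norm_num only
  exact sub_dvd_reduced_sum_sub (X : E[X]) (X ^ 4 ^ e)

theorem injective_linearPart_traceSum_add {K : Type*} [Field K] [Fintype K] [CharP K 2] {e : ℕ}
    (hK : Fintype.card K = 4 ^ e) (he2 : 2 ∣ e) (he3 : ¬ 3 ∣ e) :
    Function.Injective fun x : K => linearPart (traceSum e x) x + traceSum e x := by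
  have hfrob : ∀ y : K, y ^ 4 ^ e = y := fun y => hK ▸ FiniteField.pow_card y
  have hcubic := cubic_ne_zero (hK ▸ not_seven_dvd_four_pow_sub_one he3)
  intro x y hxy
  have hT : traceSum e x = traceSum e y := by
    simpa only [traceSum_linearPart_add_self he2 hfrob] using congrArg (traceSum e) hxy
  simp only [hT, add_left_inj] at hxy
  have hdiff := linearPart_add (traceSum e y) (x - y) y
  rw [sub_add_cancel, hxy, right_eq_add] at hdiff
  exact sub_eq_zero.mp
    (eq_zero_of_linearPart_eq_zero hcubic (traceSum_pow_four_eq_self (hfrob y)) hdiff)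

theorem stmt16_general (e : ℕ)
    (E : Type*) [Field E] [Fintype E] (hE : Fintype.card E = 4 ^ e)
    (F4 : Subfield E) [Fintype F4] (hF4 : Fintype.card F4 = 4)
    (n : ℕ) (hn : n = 1 + 2 * 4 + 4 ^ 3 + 4 ^ e + 2 * 4 ^ (e + 1))
    (g : Polynomial E)
    (hg : ∑ c : F4, (X + C (c : E)) ^ n = g.comp (X ^ 4 - X))
    (S : ℕ → Polynomial E) (hS : ∀ d, S d = ∑ i ∈ Finset.range d, X ^ 4 ^ i) :
    (X ^ 4 ^ e - X) ∣ g - (X ^ 4 ^ 2 + S e + X ^ 2 * S e ^ 2 + S 3 * S e ^ 3) ∧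
    (2 ∣ e → ¬ 3 ∣ e → Function.Bijective fun x : E => g.eval x) := by
  have : CharP E 2 := charP_of_card_eq_prime_pow (f := 2 * e) (by rw [hE, pow_mul]; norm_num)
  obtain rfl : S = fun d => traceSum d X := funext hS
  subst hn
  have hdvd := X_pow_four_pow_sub_X_dvd F4 hF4 e g hg
  refine ⟨hdvd, fun he2 he3 => ?_⟩
  have heval : (fun x : E => g.eval x) = fun x => linearPart (traceSum e x) x + traceSum e x := by
    funext x
    rw [eval_eq_of_X_pow_card_sub_X_dvd (by rwa [hE]) x]
    simp only [eval_add, eval_mul, eval_pow, eval_X, eval_traceSum_X, linearPart]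
    ring
  rw [heval]
  exact Finite.injective_iff_bijective.mp (injective_linearPart_traceSum_add hE he2 he3)

/-- Proposition 3.6: for `q = 4` and `n = 1 + 2q + q³ + q^e + 2q^{e+1}` (with `e` positive),
`g_{n,q} ≡ X^{q²} + S_e + X²S_e² + S_3S_e³ (mod X^{q^e} − X)`; moreover if `2 ∣ e` but
`3 ∤ e`, then `g_{n,q}` permutes `F_{q^e}`. -/
theorem stmt16 (e : ℕ) (he : 0 < e)
    (E : Type*) [Field E] [Fintype E] (hE : Fintype.card E = 4 ^ e)
    (F4 : Subfield E) [Fintype F4] (hF4 : Fintype.card F4 = 4)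
    (n : ℕ) (hn : n = 1 + 2 * 4 + 4 ^ 3 + 4 ^ e + 2 * 4 ^ (e + 1))
    (g : Polynomial E)
    (hg : ∑ c : F4, (X + C (c : E)) ^ n = g.comp (X ^ 4 - X))
    (S : ℕ → Polynomial E) (hS : ∀ d, S d = ∑ i ∈ Finset.range d, X ^ 4 ^ i) :
    (X ^ 4 ^ e - X) ∣ g - (X ^ 4 ^ 2 + S e + X ^ 2 * S e ^ 2 + S 3 * S e ^ 3) ∧
    (2 ∣ e → ¬ 3 ∣ e → Function.Bijective fun x : E => g.eval x) :=
  stmt16_general e E hE F4 hF4 n hn g hg S hS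
end

section
/- Let q = 4 and f = S_a + X²S_e² + S_b²S_e² ∈ F_{q^e}[X], where a, b, e are positive integers. If 2 | (a+b), gcd(e, a) = 1, and gcd( (X^{2a}+1+X^{2b+1}+X³)/(X+1)², (X^e+1)/(X+1) ) = 1 in F_4[X], then f is a permutation polynomial of F_{4^e}. -/
/-!
Write `S_d = sumPow4 d`, `T = S_e` and `f = fMap a b e`. On `𝔽_{4^e}`, `T` is the trace onto `𝔽_4`,
and `f` preserves it because `2 ∣ a + b`. Hence `f x = f (x + z)` forces `T z = 0` and
`S_a z + t² (z + S_b z)² = 0` with `t = T x ∈ 𝔽_4`. A polynomial `p ∈ 𝔽_2[X]` acts additively as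
`p(σ)`, `σ` the squaring Frobenius, and `S_d = ((X^d + 1)/(X + 1))²(σ)`; by Bézout a common zero of
`p(σ)` and `q(σ)` for coprime `p, q` is `0`. If `t = 0`, apply this to `S_a` and `T` (coprime as
`gcd(a, e) = 1`); if `t ≠ 0`, to `w = t² z`, which is killed by `T` and by `u(σ)` for
`u = (X^{2a}+1+X^{2b+1}+X³)/(X+1)²`.
-/

open Polynomial Finset

def sumPow4 {R : Type*} [CommSemiring R] (d : ℕ) (x : R) : R :=
  ∑ i ∈ range d, x ^ 4 ^ i

section CommSemiring

variable {R : Type*} [CommSemiring R]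

lemma pow_four_pow_of_pow_four_eq_s18 {c : R} (hc : c ^ 4 = c) : ∀ i : ℕ, c ^ 4 ^ i = c
  | 0 => pow_one c
  | i + 1 => by rw [pow_succ, pow_mul, pow_four_pow_of_pow_four_eq_s18 hc i, hc]

lemma sumPow4_of_pow_four_eq {t : R} (ht : t ^ 4 = t) (d : ℕ) : sumPow4 d t = d * t := by
  simp [sumPow4, pow_four_pow_of_pow_four_eq_s18 ht]

lemma sumPow4_mul_of_pow_four_eq {c : R} (hc : c ^ 4 = c) (d : ℕ) (x : R) :
    sumPow4 d (c * x) = c * sumPow4 d x := by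
  simp [sumPow4, mul_pow, pow_four_pow_of_pow_four_eq_s18 hc, mul_sum]

end CommSemiring

section CharTwo

variable {R : Type*} [CommRing R] [CharP R 2]

lemma pow_four_pow_eq_iterateFrobenius (k : ℕ) (x : R) :
    x ^ 4 ^ k = iterateFrobenius R 2 (2 * k) x := by
  rw [iterateFrobenius_def, pow_mul]; norm_num

lemma sumPow4_add (d : ℕ) (x y : R) : sumPow4 d (x + y) = sumPow4 d x + sumPow4 d y := by
  simp only [sumPow4, pow_four_pow_eq_iterateFrobenius, map_add, sum_add_distrib]

lemma sumPow4_sq (d : ℕ) (x : R) : sumPow4 d (x ^ 2) = sumPow4 d x ^ 2 := by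
  simp only [sumPow4, sum_pow_char, ← pow_mul, mul_comm]

lemma sumPow4_sumPow4_comm (d e : ℕ) (x : R) :
    sumPow4 e (sumPow4 d x) = sumPow4 d (sumPow4 e x) := by
  simp only [sumPow4, pow_four_pow_eq_iterateFrobenius, map_sum, iterateFrobenius_def, ← pow_mul]
  rw [sum_comm]
  simp only [mul_comm]

lemma sumPow4_pow_four {d : ℕ} {x : R} (hx : x ^ 4 ^ d = x) : sumPow4 d x ^ 4 = sumPow4 d x := by
  have hshift : sumPow4 d (x ^ 4) + x = sumPow4 d x + x ^ 4 ^ d := by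
    simp only [sumPow4, ← pow_mul, ← pow_succ']
    rw [← sum_range_succ, sum_range_succ' _ d, pow_zero, pow_one]
  rwa [hx, add_left_inj, show x ^ 4 = (x ^ 2) ^ 2 by ring, sumPow4_sq, sumPow4_sq, ← pow_mul]
    at hshift

def fMap (a b e : ℕ) (x : R) : R :=
  sumPow4 a x + x ^ 2 * sumPow4 e x ^ 2 + sumPow4 b x ^ 2 * sumPow4 e x ^ 2

lemma sumPow4_fMap {a b e : ℕ} (hab : 2 ∣ a + b) {x : R} (hx : x ^ 4 ^ e = x) :
    sumPow4 e (fMap a b e x) = sumPow4 e x := by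
  set t := sumPow4 e x
  have ht : t ^ 4 = t := sumPow4_pow_four hx
  have ht2 : (t ^ 2) ^ 4 = t ^ 2 := by rw [← pow_mul, mul_comm, pow_mul, ht]
  have hab' : ((a + b ^ 2 : ℕ) : R) = 0 := by
    rw [CharP.cast_eq_zero_iff R 2, ← even_iff_two_dvd, Nat.even_add, Nat.even_pow' two_ne_zero,
      ← Nat.even_add, even_iff_two_dvd]
    exact hab
  push_cast at hab'
  rw [fMap, sumPow4_add, sumPow4_add, mul_comm (x ^ 2), mul_comm (sumPow4 b x ^ 2),
    sumPow4_mul_of_pow_four_eq ht2, sumPow4_mul_of_pow_four_eq ht2, sumPow4_sq, sumPow4_sq,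
    sumPow4_sumPow4_comm, sumPow4_sumPow4_comm b, sumPow4_of_pow_four_eq ht,
    sumPow4_of_pow_four_eq ht]
  linear_combination (1 + (b : R) ^ 2) * ht + t * hab'

lemma fMap_add_of_sumPow4_eq_zero (a b e : ℕ) (x : R) {z : R} (hz : sumPow4 e z = 0) :
    fMap a b e (x + z)
      = fMap a b e x + (sumPow4 a z + sumPow4 e x ^ 2 * (z + sumPow4 b z) ^ 2) := by
  simp only [fMap, sumPow4_add, hz, add_zero, CharTwo.add_sq]
  ring

end CharTwo

section Frobenius

variable (R : Type*) [CommRing R] [Algebra (ZMod 2) R]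

noncomputable def frobEnd : Module.End (ZMod 2) R :=
  (FiniteField.frobeniusAlgHom (ZMod 2) R).toLinearMap

variable {R}

lemma frobEnd_apply (x : R) : frobEnd R x = x ^ 2 := by
  rw [frobEnd, AlgHom.toLinearMap_apply, FiniteField.coe_frobeniusAlgHom, ZMod.card]

lemma frobEnd_pow_apply (k : ℕ) (x : R) : (frobEnd R ^ k) x = x ^ 2 ^ k := by
  induction k with
  | zero => simp
  | succ k ih =>
    rw [pow_succ', Module.End.mul_apply, ih, frobEnd_apply, ← pow_mul, ← pow_succ]

lemma aeval_frobEnd_X_pow_apply (k : ℕ) (x : R) :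
    aeval (frobEnd R) (X ^ k : (ZMod 2)[X]) x = x ^ 2 ^ k := by
  rw [map_pow, aeval_X, frobEnd_pow_apply]

lemma aeval_frobEnd_geom_sum_sq_apply (d : ℕ) (x : R) :
    aeval (frobEnd R) ((∑ i ∈ range d, X ^ i : (ZMod 2)[X]) ^ 2) x = sumPow4 d x := by
  rw [sum_pow_char, map_sum, LinearMap.sum_apply]
  refine sum_congr rfl fun i _ => ?_
  rw [← pow_mul, aeval_frobEnd_X_pow_apply, pow_mul']
  norm_num

lemma eq_zero_of_isCoprime_of_aeval_frobEnd {p q : (ZMod 2)[X]} (h : IsCoprime p q) {z : R}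
    (hp : aeval (frobEnd R) p z = 0) (hq : aeval (frobEnd R) q z = 0) : z = 0 := by
  obtain ⟨c, d, hcd⟩ := h
  simpa [hp, hq, eq_comm] using congr($(congrArg (aeval (frobEnd R)) hcd) z)

end Frobenius

lemma isCoprime_geom_sum_of_coprime {K : Type*} [Field K] {a e : ℕ} (h : Nat.Coprime a e) :
    IsCoprime (∑ i ∈ range a, (X : K[X]) ^ i) (∑ i ∈ range e, X ^ i) := by
  rw [isCoprime_iff_aeval_ne_zero_of_isAlgClosed K (AlgebraicClosure K)]
  intro r
  by_contra! hr
  simp only [map_sum, map_pow, aeval_X] at hr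
  have pow_eq_one {n : ℕ} (hn : ∑ i ∈ range n, r ^ i = 0) : r ^ n = 1 := by
    rw [← sub_eq_zero, ← geom_sum_mul, hn, zero_mul]
  have hr1 : r = 1 := by
    rw [← orderOf_eq_one_iff, ← Nat.dvd_one, ← h.gcd_eq_one]
    exact Nat.dvd_gcd (orderOf_dvd_of_pow_eq_one (pow_eq_one hr.1))
      (orderOf_dvd_of_pow_eq_one (pow_eq_one hr.2))
  simp only [hr1, one_pow, sum_const, card_range, nsmul_eq_mul, mul_one, ringChar.spec] at hr
  exact CharP.ringChar_ne_one (Nat.dvd_one.mp (h.gcd_eq_one ▸ Nat.dvd_gcd hr.1 hr.2))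

lemma geom_sum_mul_X_add_one {R : Type*} [CommRing R] [CharP R 2] (n : ℕ) :
    (∑ i ∈ range n, (X : R[X]) ^ i) * (X + 1) = X ^ n + 1 := by
  simpa only [CharTwo.sub_eq_add] using geom_sum_mul (X : R[X]) n

lemma X_add_one_sq_mul_eq {R : Type*} [CommRing R] [CharP R 2] (a b : ℕ) :
    (X + 1 : R[X]) ^ 2 * ((∑ i ∈ range a, X ^ i) ^ 2 + X + X * (∑ i ∈ range b, X ^ i) ^ 2)
      = X ^ (2 * a) + 1 + X ^ (2 * b + 1) + X ^ 3 := calc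
  _ = ((∑ i ∈ range a, (X : R[X]) ^ i) * (X + 1)) ^ 2
        + X * ((∑ i ∈ range b, X ^ i) * (X + 1)) ^ 2 + X * (X + 1) ^ 2 := by ring
  _ = (X ^ a + 1) ^ 2 + X * (X ^ b + 1) ^ 2 + X * (X + 1) ^ 2 := by
    rw [geom_sum_mul_X_add_one, geom_sum_mul_X_add_one]
  _ = _ := by
    simp only [CharTwo.add_sq]
    linear_combination X * CharTwo.two_eq_zero (R := R[X])

lemma map_eq_of_X_add_one_pow_mul_eq {R L : Type*} [CommRing R] [Field L] (φ : R →+* L) {n : ℕ}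
    {p q : R[X]} {r : L[X]} (hp : (X + 1) ^ n * p = q) (hr : (X + 1) ^ n * r = q.map φ) :
    r = p.map φ := by
  refine mul_left_cancel₀ (pow_ne_zero n (by simpa using X_add_C_ne_zero (1 : L))) ?_
  rw [hr, ← hp]
  simp

lemma charP_two_of_card_eq_four_pow {K : Type*} [Field K] [Fintype K] {e : ℕ}
    (h : Fintype.card K = 4 ^ e) : CharP K 2 := by
  refine CharTwo.of_one_ne_zero_of_two_eq_zero one_ne_zero ?_
  have h4 := FiniteField.cast_card_eq_zero K
  rw [h, Nat.cast_pow, show ((4 : ℕ) : K) = 2 * 2 by norm_num] at h4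
  exact mul_self_eq_zero.mp (eq_zero_of_pow_eq_zero h4)

lemma fMap_injective {K : Type*} [Field K] [CharP K 2] {a b e : ℕ} (hab : 2 ∣ a + b)
    (hae : Nat.Coprime a e)
    (hcop : IsCoprime ((∑ i ∈ range a, X ^ i) ^ 2 + X + X * (∑ i ∈ range b, X ^ i) ^ 2)
      (∑ i ∈ range e, (X : (ZMod 2)[X]) ^ i))
    (hK : ∀ x : K, x ^ 4 ^ e = x) :
    Function.Injective (fMap a b e : K → K) := by
  let := ZMod.algebra K 2
  have eq_zero_of_isCoprime {p : (ZMod 2)[X]} (hp : IsCoprime p ((∑ i ∈ range e, X ^ i) ^ 2))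
      {z : K} (hpz : aeval (frobEnd K) p z = 0) (hz : sumPow4 e z = 0) : z = 0 :=
    eq_zero_of_isCoprime_of_aeval_frobEnd hp hpz (by rwa [aeval_frobEnd_geom_sum_sq_apply])
  intro x y hxy
  obtain ⟨z, rfl⟩ : ∃ z, y = x + z := ⟨y - x, by ring⟩
  have hz : sumPow4 e z = 0 := by
    have h := congrArg (sumPow4 e) hxy
    rwa [sumPow4_fMap hab (hK x), sumPow4_fMap hab (hK _), sumPow4_add, left_eq_add] at h
  rw [fMap_add_of_sumPow4_eq_zero a b e x hz, left_eq_add] at hxy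
  suffices z = 0 by rw [this, add_zero]
  set t := sumPow4 e x
  by_cases ht : t = 0
  · rw [ht, zero_pow two_ne_zero, zero_mul, add_zero] at hxy
    exact eq_zero_of_isCoprime (isCoprime_geom_sum_of_coprime hae).pow
      (by rwa [aeval_frobEnd_geom_sum_sq_apply]) hz
  have ht4 : t ^ 4 = t := sumPow4_pow_four (hK x)
  have ht2 : (t ^ 2) ^ 4 = t ^ 2 := by rw [← pow_mul, mul_comm, pow_mul, ht4]
  have htz : t ^ 2 * z = 0 := by
    refine eq_zero_of_isCoprime hcop.pow_right ?_
      (by rw [sumPow4_mul_of_pow_four_eq ht2, hz, mul_zero])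
    simp only [map_add, map_mul, LinearMap.add_apply, Module.End.mul_apply, aeval_X,
      aeval_frobEnd_geom_sum_sq_apply, frobEnd_apply, sumPow4_mul_of_pow_four_eq ht2]
    rw [CharTwo.add_sq] at hxy
    linear_combination t ^ 2 * hxy
  exact (mul_eq_zero.mp htz).resolve_left (pow_ne_zero 2 ht)

theorem stmt18_general (e a b : ℕ)
    (E : Type*) [Field E] [Fintype E] (hE : Fintype.card E = 4 ^ e)
    (S : ℕ → Polynomial E) (hS : ∀ d, S d = ∑ i ∈ Finset.range d, X ^ 4 ^ i)
    (f : Polynomial E) (hf : f = S a + X ^ 2 * S e ^ 2 + S b ^ 2 * S e ^ 2)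
    (hab : 2 ∣ a + b) (hea : Nat.gcd e a = 1)
    (u v : Polynomial E)
    (hu : (X + 1) ^ 2 * u = X ^ (2 * a) + 1 + X ^ (2 * b + 1) + X ^ 3)
    (hv : (X + 1) * v = X ^ e + 1)
    (huv : IsCoprime u v) :
    Function.Bijective fun x : E => f.eval x := by
  have := charP_two_of_card_eq_four_pow hE
  let φ := ZMod.castHom (dvd_refl 2) E
  have hu' := map_eq_of_X_add_one_pow_mul_eq φ (X_add_one_sq_mul_eq a b) (by simpa using hu)
  have hv' := map_eq_of_X_add_one_pow_mul_eq φ (n := 1) (p := ∑ i ∈ range e, X ^ i)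
    (by rw [pow_one, mul_comm, geom_sum_mul_X_add_one]) (by simpa using hv)
  rw [hu', hv', isCoprime_map] at huv
  have hf' : (fun x : E => f.eval x) = fMap a b e := by
    funext x
    simp [hf, hS, fMap, sumPow4, eval_finsetSum]
  rw [hf', ← Finite.injective_iff_bijective]
  exact fMap_injective hab (Nat.coprime_comm.mp hea) huv fun x => hE ▸ FiniteField.pow_card x

/-- Generalization of Proposition 3.5: for `q = 4`, `f = S_a + X²S_e² + S_b²S_e²` is a
permutation polynomial of `F_{4^e}` provided `2 ∣ (a+b)`, `gcd(e, a) = 1`, and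
`gcd((X^{2a}+1+X^{2b+1}+X³)/(X+1)², (X^e+1)/(X+1)) = 1`. -/
theorem stmt18 (e a b : ℕ) (he : 0 < e) (ha : 0 < a) (hb : 0 < b)
    (E : Type*) [Field E] [Fintype E] (hE : Fintype.card E = 4 ^ e)
    (S : ℕ → Polynomial E) (hS : ∀ d, S d = ∑ i ∈ Finset.range d, X ^ 4 ^ i)
    (f : Polynomial E) (hf : f = S a + X ^ 2 * S e ^ 2 + S b ^ 2 * S e ^ 2)
    (hab : 2 ∣ a + b) (hea : Nat.gcd e a = 1)
    (u v : Polynomial E)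
    (hu : (X + 1) ^ 2 * u = X ^ (2 * a) + 1 + X ^ (2 * b + 1) + X ^ 3)
    (hv : (X + 1) * v = X ^ e + 1)
    (huv : IsCoprime u v) :
    Function.Bijective fun x : E => f.eval x :=
  stmt18_general e a b E hE S hS f hf hab hea u v hu hv huv
end
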